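/- arXiv:1002.1538 — 5 statements merged into one kernel-verified Lean document; each statement's English description precedes it below -/
import Mathlib

section
/- In the heteroscedastic regression model, for any odd n ≥ 1, any finite Λ ⊂ [0,1]^n, any estimator ς̂_n (a random variable), and any λ ∈ Λ: E_S P̂_n(λ) ≤ E_S ||Ŝ_λ − S||_n² + (v_n/n) E_S |ς̂_n − ς_n| + σ_* u_{2,n}/n, where P̂_n(λ) = |λ|² ς̂_n/n with |λ|² = Σ_j λ(j)², v_n = max_{λ∈Λ} Σ_{j=1}^n λ(j), and u_{2,n} = max_{λ∈Λ} max_{1≤l≤n} |Σ_{j=1}^n λ(j)² (φ_j(x_l)² − 1)|. -/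
open Finset MeasureTheory ProbabilityTheory

/-- Trigonometric basis on [0,1]: `φ_1 ≡ 1`, `φ_j(x) = √2 cos(2π[j/2]x)` for even `j`,
`φ_j(x) = √2 sin(2π[j/2]x)` for odd `j ≥ 3`. -/
noncomputable def phi (j : ℕ) (x : ℝ) : ℝ :=
  if j = 1 then 1
  else if j % 2 = 0 then Real.sqrt 2 * Real.cos (2 * Real.pi * (j / 2 : ℕ) * x)
  else Real.sqrt 2 * Real.sin (2 * Real.pi * (j / 2 : ℕ) * x)

/-- Empirical Fourier coefficient `θ̂_{j,n} = (Y, φ_j)_n` of the observations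
`y_l = S(x_l) + σ_l ξ_l`, `x_l = l/n`. -/
noncomputable def thetaHat {Ω : Type*} (S : ℝ → ℝ) (ξ σw : ℕ → Ω → ℝ)
    (n j : ℕ) (ω : Ω) : ℝ :=
  (n : ℝ)⁻¹ * ∑ l ∈ Finset.Icc 1 n,
    (S ((l : ℝ) / n) + σw l ω * ξ l ω) * phi j ((l : ℝ) / n)

/-- Weighted least squares estimator `Ŝ_λ(x) = Σ_{j=1}^n λ(j) θ̂_{j,n} φ_j(x)`. -/
noncomputable def Shat {Ω : Type*} (S : ℝ → ℝ) (ξ σw : ℕ → Ω → ℝ)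
    (n : ℕ) (lam : ℕ → ℝ) (ω : Ω) (x : ℝ) : ℝ :=
  ∑ j ∈ Finset.Icc 1 n, lam j * thetaHat S ξ σw n j ω * phi j x

/-- Empirical squared norm `‖f‖_n² = n⁻¹ Σ_{l=1}^n f(l/n)²`. -/
noncomputable def empNormSq (n : ℕ) (f : ℝ → ℝ) : ℝ :=
  (n : ℝ)⁻¹ * ∑ l ∈ Finset.Icc 1 n, (f ((l : ℝ) / n)) ^ 2

/-- Integrated noise variance `ς_n = n⁻¹ Σ_{l=1}^n σ_l²`. -/
noncomputable def varsigmaN {Ω : Type*} (σw : ℕ → Ω → ℝ) (n : ℕ) (ω : Ω) : ℝ :=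
  (n : ℝ)⁻¹ * ∑ l ∈ Finset.Icc 1 n, (σw l ω) ^ 2

/-- Cost function
`J_n(λ) = Σ_j λ(j)² θ̂_{j,n}² − 2 Σ_j λ(j)(θ̂_{j,n}² − ς̂_n/n) + ρ |λ|² ς̂_n/n`. -/
noncomputable def costJ {Ω : Type*} (S : ℝ → ℝ) (ξ σw : ℕ → Ω → ℝ)
    (n : ℕ) (ρ : ℝ) (ςhat : Ω → ℝ) (lam : ℕ → ℝ) (ω : Ω) : ℝ :=
  ∑ j ∈ Finset.Icc 1 n, (lam j) ^ 2 * (thetaHat S ξ σw n j ω) ^ 2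
    - 2 * ∑ j ∈ Finset.Icc 1 n, lam j * ((thetaHat S ξ σw n j ω) ^ 2 - ςhat ω / n)
    + ρ * ((∑ j ∈ Finset.Icc 1 n, (lam j) ^ 2) * ςhat ω / n)

/-- `v_n = max_{λ∈Λ} Σ_{j=1}^n λ(j)`. -/
noncomputable def vval (n : ℕ) (Λ : Finset (ℕ → ℝ)) : ℝ :=
  ⨆ lam : Λ, ∑ j ∈ Finset.Icc 1 n, (lam : ℕ → ℝ) j

/-- `u_{i,n} = max_{λ∈Λ} max_{1≤l≤n} |Σ_{j=1}^n λ(j)^i (φ_j(x_l)² − 1)|`. -/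
noncomputable def uval (n : ℕ) (Λ : Finset (ℕ → ℝ)) (i : ℕ) : ℝ :=
  ⨆ lam : Λ, ⨆ l : Finset.Icc 1 n,
    |∑ j ∈ Finset.Icc 1 n, ((lam : ℕ → ℝ) j) ^ i
      * ((phi j (((l : ℕ) : ℝ) / n)) ^ 2 - 1)|

lemma sum_exp_eq_zero (n : ℕ) (hn : 0 < n) (k : ℤ) (hk : ¬ (n:ℤ) ∣ k) :
    ∑ l ∈ Icc 1 n, Complex.exp ((2*(Real.pi:ℂ)*k/n * Complex.I) * l) = 0 := by
  set z : ℂ := 2*(Real.pi:ℂ)*k/n * Complex.I with hz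
  have hne : (n:ℂ) ≠ 0 := by exact_mod_cast hn.ne'
  have hnz : (n:ℂ) * z = (k:ℂ) * (2*(Real.pi:ℂ)*Complex.I) := by
    rw [hz]; field_simp
  have hζn : Complex.exp z ^ n = 1 := by
    rw [← Complex.exp_nat_mul, hnz]
    exact_mod_cast Complex.exp_int_mul_two_pi_mul_I k
  have h2πI : (2*(Real.pi:ℂ)*Complex.I) ≠ 0 := by
    simp [Real.pi_ne_zero, Complex.I_ne_zero, Complex.ofReal_ne_zero]
  have hζ1 : Complex.exp z ≠ 1 := by
    intro h
    obtain ⟨m, hm⟩ := Complex.exp_eq_one_iff.mp h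
    apply hk ⟨m, ?_⟩
    have : (k:ℂ) * (2*(Real.pi:ℂ)*Complex.I) = ((n:ℂ)*m) * (2*(Real.pi:ℂ)*Complex.I) := by
      rw [← hnz, hm]; ring
    have := mul_right_cancel₀ h2πI this
    exact_mod_cast this
  have hgeom : ∑ l ∈ Finset.range n, Complex.exp z ^ l = 0 := by
    rw [geom_sum_eq hζ1, hζn, sub_self, zero_div]
  have hpow : ∑ l ∈ Icc 1 n, Complex.exp (z * l) = ∑ l ∈ Icc 1 n, Complex.exp z ^ l := by
    refine Finset.sum_congr rfl fun l _ => ?_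
    rw [← Complex.exp_nat_mul]; ring_nf
  rw [hpow, ← Finset.Ico_add_one_right_eq_Icc, Finset.sum_Ico_eq_sum_range]
  norm_num
  calc ∑ l ∈ Finset.range n, Complex.exp z ^ (1 + l)
      = Complex.exp z * ∑ l ∈ Finset.range n, Complex.exp z ^ l := by
        rw [Finset.mul_sum]; exact Finset.sum_congr rfl fun l _ => by rw [pow_add, pow_one]
    _ = 0 := by rw [hgeom, mul_zero]

lemma cos_sum (n : ℕ) (hn : 0 < n) (k : ℤ) :
    ∑ l ∈ Icc 1 n, Real.cos (2*Real.pi*k*l/n) = if (n:ℤ) ∣ k then (n:ℝ) else 0 := by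
  have hne : (n:ℝ) ≠ 0 := by exact_mod_cast hn.ne'
  by_cases h : (n:ℤ) ∣ k
  · obtain ⟨m, hm⟩ := h
    rw [if_pos ⟨m, hm⟩]
    have h1 : ∀ l ∈ Icc 1 n, Real.cos (2*Real.pi*k*l/n) = 1 := by
      intro l _
      have hk' : (k:ℝ) = (n:ℝ) * (m:ℝ) := by rw [hm]; push_cast; ring
      have : (2*Real.pi*k*l/n) = (m*l : ℤ) * (2*Real.pi) := by
        rw [hk']; push_cast; field_simp
      rw [this, Real.cos_int_mul_two_pi]
    rw [Finset.sum_congr rfl h1]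
    simp [Nat.card_Icc]
  · rw [if_neg h]
    have hre := congrArg Complex.re (sum_exp_eq_zero n hn k h)
    rw [Complex.re_sum, Complex.zero_re] at hre
    rw [← hre]
    refine Finset.sum_congr rfl fun l _ => ?_
    have : (2*(Real.pi:ℂ)*k/n * Complex.I) * l = ((2*Real.pi*k*l/n : ℝ) : ℂ) * Complex.I := by
      push_cast; ring
    rw [this, Complex.exp_ofReal_mul_I_re]

lemma sin_sum (n : ℕ) (hn : 0 < n) (k : ℤ) :
    ∑ l ∈ Icc 1 n, Real.sin (2*Real.pi*k*l/n) = 0 := by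
  have hne : (n:ℝ) ≠ 0 := by exact_mod_cast hn.ne'
  by_cases h : (n:ℤ) ∣ k
  · obtain ⟨m, hm⟩ := h
    refine Finset.sum_eq_zero fun l _ => ?_
    have hk' : (k:ℝ) = (n:ℝ) * (m:ℝ) := by rw [hm]; push_cast; ring
    have : (2*Real.pi*k*l/n) = ((2*(m*l) : ℤ) : ℝ) * Real.pi := by
      rw [hk']; push_cast; field_simp
    rw [this, Real.sin_int_mul_pi]
  · have him := congrArg Complex.im (sum_exp_eq_zero n hn k h)
    rw [Complex.im_sum, Complex.zero_im] at him
    rw [← him]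
    refine Finset.sum_congr rfl fun l _ => ?_
    have : (2*(Real.pi:ℂ)*k/n * Complex.I) * l = ((2*Real.pi*k*l/n : ℝ) : ℂ) * Complex.I := by
      push_cast; ring
    rw [this, Complex.exp_ofReal_mul_I_im]

lemma sqrt2_sq : Real.sqrt 2 * Real.sqrt 2 = 2 := Real.mul_self_sqrt (by norm_num)

lemma not_dvd_small {n : ℕ} {a b : ℕ} (ha : 1 ≤ a) (hb : 1 ≤ b) (h2 : 2*a < n) (h2' : 2*b < n) :
    ¬ (n:ℤ) ∣ ((a:ℤ) + b) := by
  intro h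
  have := Int.eq_zero_of_abs_lt_dvd h (by rw [abs_of_pos (by omega)]; omega)
  omega

lemma dvd_diff_iff {n : ℕ} {a b : ℕ} (h2 : 2*a < n) (h2' : 2*b < n) :
    (n:ℤ) ∣ ((a:ℤ) - b) ↔ a = b := by
  constructor
  · intro h
    have := Int.eq_zero_of_abs_lt_dvd h (by rw [abs_lt]; omega)
    omega
  · rintro rfl; simp

lemma cc_sum (n : ℕ) (hn : 0 < n) (m m' : ℕ) (h1 : 1 ≤ m) (h1' : 1 ≤ m')
    (h2 : 2*m < n) (h2' : 2*m' < n) :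
    ∑ l ∈ Icc 1 n, (Real.sqrt 2 * Real.cos (2*Real.pi*(m:ℝ)*((l:ℝ)/n)))
        * (Real.sqrt 2 * Real.cos (2*Real.pi*(m':ℝ)*((l:ℝ)/n)))
      = if m = m' then (n:ℝ) else 0 := by
  have key : ∀ l ∈ Icc 1 n,
      (Real.sqrt 2 * Real.cos (2*Real.pi*(m:ℝ)*((l:ℝ)/n)))
        * (Real.sqrt 2 * Real.cos (2*Real.pi*(m':ℝ)*((l:ℝ)/n)))
      = Real.cos (2*Real.pi*(((m:ℤ)-(m':ℤ) : ℤ):ℝ)*(l:ℝ)/(n:ℝ))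
        + Real.cos (2*Real.pi*(((m:ℤ)+(m':ℤ) : ℤ):ℝ)*(l:ℝ)/(n:ℝ)) := by
    intro l _
    set a := 2*Real.pi*(m:ℝ)*((l:ℝ)/n) with ha
    set b := 2*Real.pi*(m':ℝ)*((l:ℝ)/n) with hb
    have e1 : 2*Real.pi*(((m:ℤ)-(m':ℤ) : ℤ):ℝ)*(l:ℝ)/(n:ℝ) = a - b := by
      rw [ha, hb]; push_cast; ring
    have e2 : 2*Real.pi*(((m:ℤ)+(m':ℤ) : ℤ):ℝ)*(l:ℝ)/(n:ℝ) = a + b := by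
      rw [ha, hb]; push_cast; ring
    rw [e1, e2, Real.cos_sub, Real.cos_add]
    linear_combination (Real.cos a * Real.cos b) * sqrt2_sq
  rw [Finset.sum_congr rfl key, Finset.sum_add_distrib, cos_sum n hn _, cos_sum n hn _,
    if_neg (not_dvd_small h1 h1' h2 h2'), add_zero]
  simp only [dvd_diff_iff h2 h2']

lemma ss_sum (n : ℕ) (hn : 0 < n) (m m' : ℕ) (h1 : 1 ≤ m) (h1' : 1 ≤ m')
    (h2 : 2*m < n) (h2' : 2*m' < n) :
    ∑ l ∈ Icc 1 n, (Real.sqrt 2 * Real.sin (2*Real.pi*(m:ℝ)*((l:ℝ)/n)))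
        * (Real.sqrt 2 * Real.sin (2*Real.pi*(m':ℝ)*((l:ℝ)/n)))
      = if m = m' then (n:ℝ) else 0 := by
  have key : ∀ l ∈ Icc 1 n,
      (Real.sqrt 2 * Real.sin (2*Real.pi*(m:ℝ)*((l:ℝ)/n)))
        * (Real.sqrt 2 * Real.sin (2*Real.pi*(m':ℝ)*((l:ℝ)/n)))
      = Real.cos (2*Real.pi*(((m:ℤ)-(m':ℤ) : ℤ):ℝ)*(l:ℝ)/(n:ℝ))
        - Real.cos (2*Real.pi*(((m:ℤ)+(m':ℤ) : ℤ):ℝ)*(l:ℝ)/(n:ℝ)) := by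
    intro l _
    set a := 2*Real.pi*(m:ℝ)*((l:ℝ)/n) with ha
    set b := 2*Real.pi*(m':ℝ)*((l:ℝ)/n) with hb
    have e1 : 2*Real.pi*(((m:ℤ)-(m':ℤ) : ℤ):ℝ)*(l:ℝ)/(n:ℝ) = a - b := by
      rw [ha, hb]; push_cast; ring
    have e2 : 2*Real.pi*(((m:ℤ)+(m':ℤ) : ℤ):ℝ)*(l:ℝ)/(n:ℝ) = a + b := by
      rw [ha, hb]; push_cast; ring
    rw [e1, e2, Real.cos_sub, Real.cos_add]
    linear_combination (Real.sin a * Real.sin b) * sqrt2_sq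
  rw [Finset.sum_congr rfl key, Finset.sum_sub_distrib, cos_sum n hn _, cos_sum n hn _,
    if_neg (not_dvd_small h1 h1' h2 h2'), sub_zero]
  simp only [dvd_diff_iff h2 h2']

lemma cs_sum (n : ℕ) (hn : 0 < n) (m m' : ℕ) :
    ∑ l ∈ Icc 1 n, (Real.sqrt 2 * Real.cos (2*Real.pi*(m:ℝ)*((l:ℝ)/n)))
        * (Real.sqrt 2 * Real.sin (2*Real.pi*(m':ℝ)*((l:ℝ)/n))) = 0 := by
  have key : ∀ l ∈ Icc 1 n,
      (Real.sqrt 2 * Real.cos (2*Real.pi*(m:ℝ)*((l:ℝ)/n)))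
        * (Real.sqrt 2 * Real.sin (2*Real.pi*(m':ℝ)*((l:ℝ)/n)))
      = Real.sin (2*Real.pi*(((m:ℤ)+(m':ℤ) : ℤ):ℝ)*(l:ℝ)/(n:ℝ))
        - Real.sin (2*Real.pi*(((m:ℤ)-(m':ℤ) : ℤ):ℝ)*(l:ℝ)/(n:ℝ)) := by
    intro l _
    set a := 2*Real.pi*(m:ℝ)*((l:ℝ)/n) with ha
    set b := 2*Real.pi*(m':ℝ)*((l:ℝ)/n) with hb
    have e1 : 2*Real.pi*(((m:ℤ)-(m':ℤ) : ℤ):ℝ)*(l:ℝ)/(n:ℝ) = a - b := by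
      rw [ha, hb]; push_cast; ring
    have e2 : 2*Real.pi*(((m:ℤ)+(m':ℤ) : ℤ):ℝ)*(l:ℝ)/(n:ℝ) = a + b := by
      rw [ha, hb]; push_cast; ring
    rw [e1, e2, Real.sin_sub, Real.sin_add]
    linear_combination (Real.cos a * Real.sin b) * sqrt2_sq
  rw [Finset.sum_congr rfl key, Finset.sum_sub_distrib, sin_sum n hn _, sin_sum n hn _, sub_zero]

lemma c_sum (n : ℕ) (hn : 0 < n) (m : ℕ) (h1 : 1 ≤ m) (h2 : 2*m < n) :
    ∑ l ∈ Icc 1 n, Real.sqrt 2 * Real.cos (2*Real.pi*(m:ℝ)*((l:ℝ)/n)) = 0 := by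
  have key : ∀ l ∈ Icc 1 n, Real.sqrt 2 * Real.cos (2*Real.pi*(m:ℝ)*((l:ℝ)/n))
      = Real.sqrt 2 * Real.cos (2*Real.pi*((m:ℤ):ℝ)*(l:ℝ)/(n:ℝ)) := by
    intro l _; congr 1; push_cast; ring
  rw [Finset.sum_congr rfl key, ← Finset.mul_sum, cos_sum n hn _, if_neg, mul_zero]
  intro h
  have := Int.eq_zero_of_abs_lt_dvd h (by rw [abs_of_pos (by omega)]; omega)
  omega

lemma s_sum (n : ℕ) (hn : 0 < n) (m : ℕ) :
    ∑ l ∈ Icc 1 n, Real.sqrt 2 * Real.sin (2*Real.pi*(m:ℝ)*((l:ℝ)/n)) = 0 := by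
  have key : ∀ l ∈ Icc 1 n, Real.sqrt 2 * Real.sin (2*Real.pi*(m:ℝ)*((l:ℝ)/n))
      = Real.sqrt 2 * Real.sin (2*Real.pi*((m:ℤ):ℝ)*(l:ℝ)/(n:ℝ)) := by
    intro l _; congr 1; push_cast; ring
  rw [Finset.sum_congr rfl key, ← Finset.mul_sum, sin_sum n hn _, mul_zero]

lemma phi_orth (n : ℕ) (hn : 1 ≤ n) (hodd : Odd n) :
    ∀ j ∈ Icc 1 n, ∀ j' ∈ Icc 1 n,
      ∑ l ∈ Icc 1 n, phi j ((l:ℝ)/n) * phi j' ((l:ℝ)/n) = if j = j' then (n:ℝ) else 0 := by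
  intro j hj j' hj'
  rw [Finset.mem_Icc] at hj hj'
  have hn0 : 0 < n := hn
  have hodd' : n % 2 = 1 := Nat.odd_iff.mp hodd
  have freq : ∀ i : ℕ, 1 ≤ i → i ≤ n → i ≠ 1 → 1 ≤ i/2 ∧ 2*(i/2) < n := by
    intro i ha hb hc
    rcases Nat.even_or_odd i with he | ho
    · obtain ⟨c, rfl⟩ := he; omega
    · obtain ⟨c, rfl⟩ := ho; omega
  by_cases e1 : j = 1 <;> by_cases e1' : j' = 1
  · subst e1; subst e1'; simp [phi, Nat.card_Icc]
  · subst e1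
    rw [if_neg (by omega)]
    obtain ⟨hm1, hm2⟩ := freq j' hj'.1 hj'.2 e1'
    by_cases e2' : j' % 2 = 0
    · simp only [phi, if_neg e1', if_pos e2', if_true, one_mul]
      exact c_sum n hn0 _ hm1 hm2
    · simp only [phi, if_neg e1', if_neg e2', if_true, one_mul]
      exact s_sum n hn0 _
  · subst e1'
    rw [if_neg (by omega)]
    obtain ⟨hm1, hm2⟩ := freq j hj.1 hj.2 e1
    by_cases e2 : j % 2 = 0
    · simp only [phi, if_neg e1, if_pos e2, if_true, mul_one]
      exact c_sum n hn0 _ hm1 hm2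
    · simp only [phi, if_neg e1, if_neg e2, if_true, mul_one]
      exact s_sum n hn0 _
  · obtain ⟨hm1, hm2⟩ := freq j hj.1 hj.2 e1
    obtain ⟨hm1', hm2'⟩ := freq j' hj'.1 hj'.2 e1'
    by_cases e2 : j % 2 = 0 <;> by_cases e2' : j' % 2 = 0
    · simp only [phi, if_neg e1, if_pos e2, if_neg e1', if_pos e2']
      rw [cc_sum n hn0 _ _ hm1 hm1' hm2 hm2']
      by_cases h : j = j'
      · subst h; simp
      · rw [if_neg (by omega), if_neg h]
    · simp only [phi, if_neg e1, if_pos e2, if_neg e1', if_neg e2']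
      rw [cs_sum n hn0 _ _, if_neg (by omega)]
    · simp only [phi, if_neg e1, if_neg e2, if_neg e1', if_pos e2']
      have : ∀ l ∈ Icc 1 n,
          (Real.sqrt 2 * Real.sin (2*Real.pi*((j/2 : ℕ):ℝ)*((l:ℝ)/n)))
            * (Real.sqrt 2 * Real.cos (2*Real.pi*((j'/2 : ℕ):ℝ)*((l:ℝ)/n)))
          = (Real.sqrt 2 * Real.cos (2*Real.pi*((j'/2 : ℕ):ℝ)*((l:ℝ)/n)))
            * (Real.sqrt 2 * Real.sin (2*Real.pi*((j/2 : ℕ):ℝ)*((l:ℝ)/n))) := by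
        intro l _; ring
      rw [Finset.sum_congr rfl this, cs_sum n hn0 _ _, if_neg (by omega)]
    · simp only [phi, if_neg e1, if_neg e2, if_neg e1', if_neg e2']
      rw [ss_sum n hn0 _ _ hm1 hm1' hm2 hm2']
      by_cases h : j = j'
      · subst h; simp
      · rw [if_neg (by omega), if_neg h]

lemma bessel (n : ℕ) (hn : 1 ≤ n) (hodd : Odd n) (g : ℕ → ℝ) :
    ∑ j ∈ Icc 1 n, ((n:ℝ)⁻¹ * ∑ l ∈ Icc 1 n, g l * phi j ((l:ℝ)/n))^2
      ≤ (n:ℝ)⁻¹ * ∑ l ∈ Icc 1 n, (g l)^2 := by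
  have horth := phi_orth n hn hodd
  have hnne : (n:ℝ) ≠ 0 := by positivity
  set c : ℕ → ℝ := fun j => (n:ℝ)⁻¹ * ∑ l ∈ Icc 1 n, g l * phi j ((l:ℝ)/n) with hc
  have hcn : ∀ j, ∑ l ∈ Icc 1 n, g l * phi j ((l:ℝ)/n) = (n:ℝ) * c j := by
    intro j; rw [hc]; field_simp
  have hgh : ∑ l ∈ Icc 1 n, g l * (∑ j ∈ Icc 1 n, c j * phi j ((l:ℝ)/n))
      = (n:ℝ) * ∑ j ∈ Icc 1 n, (c j)^2 := by
    calc ∑ l ∈ Icc 1 n, g l * (∑ j ∈ Icc 1 n, c j * phi j ((l:ℝ)/n))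
        = ∑ l ∈ Icc 1 n, ∑ j ∈ Icc 1 n, c j * (g l * phi j ((l:ℝ)/n)) := by
          refine Finset.sum_congr rfl fun l _ => ?_
          rw [Finset.mul_sum]; exact Finset.sum_congr rfl fun j _ => by ring
      _ = ∑ j ∈ Icc 1 n, ∑ l ∈ Icc 1 n, c j * (g l * phi j ((l:ℝ)/n)) := Finset.sum_comm
      _ = ∑ j ∈ Icc 1 n, c j * ((n:ℝ) * c j) := by
          refine Finset.sum_congr rfl fun j _ => ?_
          rw [← Finset.mul_sum, hcn j]
      _ = (n:ℝ) * ∑ j ∈ Icc 1 n, (c j)^2 := by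
          rw [Finset.mul_sum]; exact Finset.sum_congr rfl fun j _ => by ring
  have hh : ∑ l ∈ Icc 1 n, (∑ j ∈ Icc 1 n, c j * phi j ((l:ℝ)/n))^2
      = (n:ℝ) * ∑ j ∈ Icc 1 n, (c j)^2 := by
    calc ∑ l ∈ Icc 1 n, (∑ j ∈ Icc 1 n, c j * phi j ((l:ℝ)/n))^2
        = ∑ l ∈ Icc 1 n, ∑ j ∈ Icc 1 n, ∑ j' ∈ Icc 1 n,
            (c j * c j') * (phi j ((l:ℝ)/n) * phi j' ((l:ℝ)/n)) := by
          refine Finset.sum_congr rfl fun l _ => ?_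
          rw [sq, Finset.sum_mul_sum]
          exact Finset.sum_congr rfl fun j _ => Finset.sum_congr rfl fun j' _ => by ring
      _ = ∑ j ∈ Icc 1 n, ∑ j' ∈ Icc 1 n, (c j * c j') * (∑ l ∈ Icc 1 n,
            phi j ((l:ℝ)/n) * phi j' ((l:ℝ)/n)) := by
          rw [Finset.sum_comm]
          refine Finset.sum_congr rfl fun j _ => ?_
          rw [Finset.sum_comm]
          exact Finset.sum_congr rfl fun j' _ => by rw [Finset.mul_sum]
      _ = ∑ j ∈ Icc 1 n, (c j)^2 * (n:ℝ) := by
          refine Finset.sum_congr rfl fun j hj => ?_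
          rw [Finset.sum_eq_single_of_mem j hj]
          · rw [horth j hj j hj, if_pos rfl]; ring
          · intro j' hj' hne
            rw [horth j hj j' hj', if_neg (fun h => hne h.symm), mul_zero]
      _ = (n:ℝ) * ∑ j ∈ Icc 1 n, (c j)^2 := by
          rw [Finset.mul_sum]; exact Finset.sum_congr rfl fun j _ => by ring
  have key : 0 ≤ (n:ℝ)⁻¹ * ∑ l ∈ Icc 1 n,
      (g l - ∑ j ∈ Icc 1 n, c j * phi j ((l:ℝ)/n))^2 := by positivity
  have expand : ∑ l ∈ Icc 1 n, (g l - ∑ j ∈ Icc 1 n, c j * phi j ((l:ℝ)/n))^2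
      = ∑ l ∈ Icc 1 n, (g l)^2
        - 2 * ∑ l ∈ Icc 1 n, g l * (∑ j ∈ Icc 1 n, c j * phi j ((l:ℝ)/n))
        + ∑ l ∈ Icc 1 n, (∑ j ∈ Icc 1 n, c j * phi j ((l:ℝ)/n))^2 := by
    rw [Finset.mul_sum, ← Finset.sum_sub_distrib, ← Finset.sum_add_distrib]
    exact Finset.sum_congr rfl fun l _ => by ring
  rw [expand, hgh, hh] at key
  have : (n:ℝ)⁻¹ * ((n:ℝ) * ∑ j ∈ Icc 1 n, (c j)^2) = ∑ j ∈ Icc 1 n, (c j)^2 := by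
    field_simp
  nlinarith [key, this]

noncomputable def thetaS (S : ℝ → ℝ) (n j : ℕ) : ℝ :=
  (n : ℝ)⁻¹ * ∑ l ∈ Icc 1 n, S ((l:ℝ)/n) * phi j ((l:ℝ)/n)

noncomputable def zeta {Ω : Type*} (ξ σw : ℕ → Ω → ℝ) (n j : ℕ) (ω : Ω) : ℝ :=
  (n : ℝ)⁻¹ * ∑ l ∈ Icc 1 n, (σw l ω * ξ l ω) * phi j ((l:ℝ)/n)

lemma thetaHat_split {Ω : Type*} (S : ℝ → ℝ) (ξ σw : ℕ → Ω → ℝ) (n j : ℕ) (ω : Ω) :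
    thetaHat S ξ σw n j ω = thetaS S n j + zeta ξ σw n j ω := by
  unfold thetaHat thetaS zeta
  rw [← mul_add, ← Finset.sum_add_distrib]
  congr 1
  exact Finset.sum_congr rfl fun l _ => by ring

lemma coeff_bound {Ω : Type*} (S : ℝ → ℝ) (ξ σw : ℕ → Ω → ℝ) (n : ℕ)
    (hn : 1 ≤ n) (hodd : Odd n) (lam : ℕ → ℝ) (ω : Ω) :
    ∑ j ∈ Icc 1 n, (lam j * thetaHat S ξ σw n j ω - thetaS S n j)^2
      ≤ empNormSq n (fun x => Shat S ξ σw n lam ω x - S x) := by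
  have hnne : (n:ℝ) ≠ 0 := by positivity
  set g : ℕ → ℝ := fun l => Shat S ξ σw n lam ω ((l:ℝ)/n) - S ((l:ℝ)/n) with hg
  have hSc : ∀ j ∈ Icc 1 n,
      (n:ℝ)⁻¹ * ∑ l ∈ Icc 1 n, g l * phi j ((l:ℝ)/n)
        = lam j * thetaHat S ξ σw n j ω - thetaS S n j := by
    intro j hj
    have h1 : ∑ l ∈ Icc 1 n, g l * phi j ((l:ℝ)/n)
        = ∑ l ∈ Icc 1 n, Shat S ξ σw n lam ω ((l:ℝ)/n) * phi j ((l:ℝ)/n)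
          - ∑ l ∈ Icc 1 n, S ((l:ℝ)/n) * phi j ((l:ℝ)/n) := by
      rw [← Finset.sum_sub_distrib]
      exact Finset.sum_congr rfl fun l _ => by rw [hg]; ring
    rw [h1, mul_sub]
    congr 1
    have h2 : ∑ l ∈ Icc 1 n, Shat S ξ σw n lam ω ((l:ℝ)/n) * phi j ((l:ℝ)/n)
        = ∑ j' ∈ Icc 1 n, (lam j' * thetaHat S ξ σw n j' ω)
            * ∑ l ∈ Icc 1 n, phi j' ((l:ℝ)/n) * phi j ((l:ℝ)/n) := by
      unfold Shat
      calc ∑ l ∈ Icc 1 n, (∑ j' ∈ Icc 1 n, lam j' * thetaHat S ξ σw n j' ω * phi j' ((l:ℝ)/n)) * phi j ((l:ℝ)/n)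
          = ∑ l ∈ Icc 1 n, ∑ j' ∈ Icc 1 n,
              (lam j' * thetaHat S ξ σw n j' ω) * (phi j' ((l:ℝ)/n) * phi j ((l:ℝ)/n)) := by
            refine Finset.sum_congr rfl fun l _ => ?_
            rw [Finset.sum_mul]
            exact Finset.sum_congr rfl fun j' _ => by ring
        _ = ∑ j' ∈ Icc 1 n, ∑ l ∈ Icc 1 n,
              (lam j' * thetaHat S ξ σw n j' ω) * (phi j' ((l:ℝ)/n) * phi j ((l:ℝ)/n)) :=
            Finset.sum_comm
        _ = ∑ j' ∈ Icc 1 n, (lam j' * thetaHat S ξ σw n j' ω)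
              * ∑ l ∈ Icc 1 n, phi j' ((l:ℝ)/n) * phi j ((l:ℝ)/n) :=
            Finset.sum_congr rfl fun j' _ => (Finset.mul_sum _ _ _).symm
    rw [h2, Finset.sum_eq_single_of_mem j hj
      (fun j' hj' hne => by rw [phi_orth n hn hodd j' hj' j hj, if_neg hne, mul_zero])]
    rw [phi_orth n hn hodd j hj j hj, if_pos rfl]
    field_simp
  have hb := bessel n hn hodd g
  have e : ∑ j ∈ Icc 1 n, (lam j * thetaHat S ξ σw n j ω - thetaS S n j)^2
      = ∑ j ∈ Icc 1 n, ((n:ℝ)⁻¹ * ∑ l ∈ Icc 1 n, g l * phi j ((l:ℝ)/n))^2 :=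
    Finset.sum_congr rfl fun j hj => by rw [hSc j hj]
  rw [e]
  exact hb

/-- Lemma A.1: in the heteroscedastic regression model, for any odd `n ≥ 1`, any finite
`Λ ⊂ [0,1]^n`, any estimator `ς̂_n` and any `λ ∈ Λ`:
`E P̂_n(λ) ≤ E‖Ŝ_λ − S‖_n² + (v_n/n) E|ς̂_n − ς_n| + σ_* u_{2,n}/n`,
where `P̂_n(λ) = |λ|² ς̂_n/n`. -/
theorem penalty_bound
    {Ω : Type*} [MeasureSpace Ω] [IsProbabilityMeasure (ℙ : Measure Ω)]
    (n : ℕ) (hn1 : 1 ≤ n) (hodd : Odd n)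
    (S : ℝ → ℝ)
    (ξ σw : ℕ → Ω → ℝ)
    (hmξ : ∀ l, Measurable (ξ l)) (hmσ : ∀ l, Measurable (σw l))
    (hindepξ : iIndepFun (fun l : Fin n => ξ (l.1 + 1)) ℙ)
    (hident : ∀ l ∈ Finset.Icc 1 n, IdentDistrib (ξ l) (ξ 1) ℙ ℙ)
    (hmean : ∫ ω, ξ 1 ω ∂ℙ = 0)
    (hvar : ∫ ω, (ξ 1 ω) ^ 2 ∂ℙ = 1)
    (hint4 : Integrable (fun ω => (ξ 1 ω) ^ 4) ℙ)
    (hσpos : ∀ l ∈ Finset.Icc 1 n, ∀ᵐ ω ∂ℙ, 0 < σw l ω)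
    (σstar : ℝ) (hσstar : 0 < σstar)
    (hbound : ∀ᵐ ω ∂ℙ, ∀ l ∈ Finset.Icc 1 n, (σw l ω) ^ 2 ≤ σstar)
    (hindepσξ : IndepFun (fun ω => fun l : Fin n => σw (l.1 + 1) ω)
                         (fun ω => fun l : Fin n => ξ (l.1 + 1) ω) ℙ)
    (Λ : Finset (ℕ → ℝ)) (hΛne : Λ.Nonempty)
    (hΛ01 : ∀ lam' ∈ Λ, ∀ j ∈ Finset.Icc 1 n, lam' j ∈ Set.Icc (0 : ℝ) 1)
    (hΛ0 : ∀ lam' ∈ Λ, ∀ j, j ∉ Finset.Icc 1 n → lam' j = 0)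
    (ςhat : Ω → ℝ) (hςhat : Measurable ςhat)
    (lam : ℕ → ℝ) (hlam : lam ∈ Λ) :
    ∫ ω, (∑ j ∈ Finset.Icc 1 n, (lam j) ^ 2) * ςhat ω / n ∂ℙ
      ≤ (∫ ω, empNormSq n (fun x => Shat S ξ σw n lam ω x - S x) ∂ℙ)
        + vval n Λ / n * ∫ ω, |ςhat ω - varsigmaN σw n ω| ∂ℙ
        + σstar * uval n Λ 2 / n := by
  have hn0 : (0:ℝ) < n := by exact_mod_cast hn1
  have hnne : (n:ℝ) ≠ 0 := hn0.ne'
  -- ## basic facts about ξ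
  have hxi_mean : ∀ l ∈ Icc 1 n, ∫ ω, ξ l ω ∂ℙ = 0 := fun l hl => by
    rw [(hident l hl).integral_eq]; exact hmean
  have hxi_sq_ident : ∀ l ∈ Icc 1 n,
      IdentDistrib (fun ω => (ξ l ω)^2) (fun ω => (ξ 1 ω)^2) ℙ ℙ := fun l hl =>
    (hident l hl).comp (measurable_id.pow_const 2)
  have hxi_var : ∀ l ∈ Icc 1 n, ∫ ω, (ξ l ω)^2 ∂ℙ = 1 := fun l hl => by
    rw [(hxi_sq_ident l hl).integral_eq]; exact hvar
  have hxi1_sq_int : Integrable (fun ω => (ξ 1 ω)^2) ℙ := by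
    refine Integrable.mono' ((integrable_const (1:ℝ)).add hint4)
      ((hmξ 1).pow_const 2).aestronglyMeasurable ?_
    filter_upwards with ω
    simp only [Pi.add_apply]
    rw [Real.norm_eq_abs, abs_of_nonneg (sq_nonneg _)]
    nlinarith [sq_nonneg ((ξ 1 ω)^2 - 1)]
  have hxi_sq_int : ∀ l ∈ Icc 1 n, Integrable (fun ω => (ξ l ω)^2) ℙ := fun l hl =>
    (hxi_sq_ident l hl).integrable_iff.mpr hxi1_sq_int
  have hxi_int : ∀ l ∈ Icc 1 n, Integrable (ξ l) ℙ := fun l hl =>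
    ((memLp_two_iff_integrable_sq (hmξ l).aestronglyMeasurable).mpr
      (hxi_sq_int l hl)).integrable one_le_two
  -- independence facts
  have hpair : ∀ l ∈ Icc 1 n, ∀ l' ∈ Icc 1 n, l ≠ l' → IndepFun (ξ l) (ξ l') ℙ := by
    intro l hl l' hl' h
    rw [Finset.mem_Icc] at hl hl'
    have h1 : l - 1 < n := by omega
    have h1' : l' - 1 < n := by omega
    have hne : (⟨l-1, h1⟩ : Fin n) ≠ ⟨l'-1, h1'⟩ := by
      simp only [ne_eq, Fin.mk.injEq]; omega
    have hi := hindepξ.indepFun hne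
    have e1 : l - 1 + 1 = l := by omega
    have e1' : l' - 1 + 1 = l' := by omega
    rwa [e1, e1'] at hi
  have hxi_mul_int : ∀ l ∈ Icc 1 n, ∀ l' ∈ Icc 1 n,
      Integrable (fun ω => ξ l ω * ξ l' ω) ℙ := by
    intro l hl l' hl'
    by_cases h : l = l'
    · subst h; simpa [sq] using hxi_sq_int l hl
    · exact (hpair l hl l' hl' h).integrable_mul (hxi_int l hl) (hxi_int l' hl')
  have hxi_mul_mean : ∀ l ∈ Icc 1 n, ∀ l' ∈ Icc 1 n, l ≠ l' →
      ∫ ω, ξ l ω * ξ l' ω ∂ℙ = 0 := by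
    intro l hl l' hl' h
    have := (hpair l hl l' hl' h).integral_mul_eq_mul_integral
      (hmξ l).aestronglyMeasurable (hmξ l').aestronglyMeasurable
    have e : ∫ ω, ξ l ω * ξ l' ω ∂ℙ = ∫ ω, (ξ l * ξ l') ω ∂ℙ := rfl
    rw [e, this, hxi_mean l hl, zero_mul]
  have hind_prod : ∀ l ∈ Icc 1 n, ∀ l' ∈ Icc 1 n,
      IndepFun (fun ω => σw l ω * σw l' ω) (fun ω => ξ l ω * ξ l' ω) ℙ := by
    intro l hl l' hl'
    rw [Finset.mem_Icc] at hl hl'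
    have h1 : l - 1 < n := by omega
    have h1' : l' - 1 < n := by omega
    have e1 : l - 1 + 1 = l := by omega
    have e1' : l' - 1 + 1 = l' := by omega
    have := hindepσξ.comp (φ := fun v : Fin n → ℝ => v ⟨l-1, h1⟩ * v ⟨l'-1, h1'⟩)
      (ψ := fun v : Fin n → ℝ => v ⟨l-1, h1⟩ * v ⟨l'-1, h1'⟩)
      (by fun_prop) (by fun_prop)
    have eσ : (fun v : Fin n → ℝ => v ⟨l-1, h1⟩ * v ⟨l'-1, h1'⟩)
        ∘ (fun ω (i : Fin n) => σw (i.1 + 1) ω) = fun ω => σw l ω * σw l' ω := by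
      funext ω
      show σw (l-1+1) ω * σw (l'-1+1) ω = _
      rw [e1, e1']
    have eξ : (fun v : Fin n → ℝ => v ⟨l-1, h1⟩ * v ⟨l'-1, h1'⟩)
        ∘ (fun ω (i : Fin n) => ξ (i.1 + 1) ω) = fun ω => ξ l ω * ξ l' ω := by
      funext ω
      show ξ (l-1+1) ω * ξ (l'-1+1) ω = _
      rw [e1, e1']
    rwa [eσ, eξ] at this
  have hind_single : ∀ l ∈ Icc 1 n, IndepFun (σw l) (ξ l) ℙ := by
    intro l hl
    rw [Finset.mem_Icc] at hl
    have h1 : l - 1 < n := by omega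
    have e1 : l - 1 + 1 = l := by omega
    have := hindepσξ.comp (φ := fun v : Fin n → ℝ => v ⟨l-1, h1⟩)
      (ψ := fun v : Fin n → ℝ => v ⟨l-1, h1⟩)
      (show Measurable fun v : Fin n → ℝ => v ⟨l-1, h1⟩ from measurable_pi_apply _)
      (show Measurable fun v : Fin n → ℝ => v ⟨l-1, h1⟩ from measurable_pi_apply _)
    have eσ : (fun v : Fin n → ℝ => v ⟨l-1, h1⟩)
        ∘ (fun ω (i : Fin n) => σw (i.1 + 1) ω) = σw l := by
      funext ω
      show σw (l-1+1) ω = _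
      rw [e1]
    have eξ : (fun v : Fin n → ℝ => v ⟨l-1, h1⟩)
        ∘ (fun ω (i : Fin n) => ξ (i.1 + 1) ω) = ξ l := by
      funext ω
      show ξ (l-1+1) ω = _
      rw [e1]
    rwa [eσ, eξ] at this
  -- ## facts about σ
  have hσb : ∀ l ∈ Icc 1 n, ∀ᵐ ω ∂ℙ, |σw l ω| ≤ Real.sqrt σstar := by
    intro l hl
    filter_upwards [hbound] with ω hω
    rw [← Real.sqrt_sq_eq_abs]
    exact Real.sqrt_le_sqrt (hω l hl)
  have hσsq_int : ∀ l ∈ Icc 1 n, Integrable (fun ω => (σw l ω)^2) ℙ := by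
    intro l hl
    refine Integrable.mono' (integrable_const σstar)
      ((hmσ l).pow_const 2).aestronglyMeasurable ?_
    filter_upwards [hbound] with ω hω
    rw [Real.norm_eq_abs, abs_of_nonneg (sq_nonneg _)]
    exact hω l hl
  set Es : ℕ → ℝ := fun l => ∫ ω, (σw l ω)^2 ∂ℙ with hEs
  have hEs_nonneg : ∀ l, 0 ≤ Es l := fun l => integral_nonneg (fun ω => sq_nonneg _)
  have hEs_le : ∀ l ∈ Icc 1 n, Es l ≤ σstar := by
    intro l hl
    calc Es l ≤ ∫ _, σstar ∂ℙ := by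
          refine integral_mono_ae (hσsq_int l hl) (integrable_const _) ?_
          filter_upwards [hbound] with ω hω
          exact hω l hl
      _ = σstar := by simp
  -- ## facts about T l = σ_l ξ_l
  have hT_int : ∀ l ∈ Icc 1 n, Integrable (fun ω => σw l ω * ξ l ω) ℙ := by
    intro l hl
    refine Integrable.mono' ((hxi_int l hl).abs.const_mul (Real.sqrt σstar))
      ((hmσ l).mul (hmξ l)).aestronglyMeasurable ?_
    filter_upwards [hσb l hl] with ω hω
    rw [Real.norm_eq_abs, abs_mul]
    exact mul_le_mul_of_nonneg_right hω (abs_nonneg _)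
  have hT_mean : ∀ l ∈ Icc 1 n, ∫ ω, σw l ω * ξ l ω ∂ℙ = 0 := by
    intro l hl
    have h1 := (hind_single l hl).integral_mul_eq_mul_integral
      (hmσ l).aestronglyMeasurable (hmξ l).aestronglyMeasurable
    have e : ∫ ω, σw l ω * ξ l ω ∂ℙ = ∫ ω, (σw l * ξ l) ω ∂ℙ := rfl
    rw [e, h1, hxi_mean l hl, mul_zero]
  have hTT_int : ∀ l ∈ Icc 1 n, ∀ l' ∈ Icc 1 n,
      Integrable (fun ω => (σw l ω * ξ l ω) * (σw l' ω * ξ l' ω)) ℙ := by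
    intro l hl l' hl'
    refine Integrable.mono' ((hxi_mul_int l hl l' hl').abs.const_mul σstar)
      ((((hmσ l).mul (hmξ l)).mul ((hmσ l').mul (hmξ l'))).aestronglyMeasurable) ?_
    filter_upwards [hσb l hl, hσb l' hl'] with ω h1 h2
    rw [Real.norm_eq_abs]
    have e : |σw l ω * ξ l ω * (σw l' ω * ξ l' ω)|
        = (|σw l ω| * |σw l' ω|) * |ξ l ω * ξ l' ω| := by
      simp only [abs_mul]; ring
    rw [e]
    have h3 : |σw l ω| * |σw l' ω| ≤ σstar := by
      calc |σw l ω| * |σw l' ω| ≤ Real.sqrt σstar * Real.sqrt σstar :=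
            mul_le_mul h1 h2 (abs_nonneg _) (Real.sqrt_nonneg _)
        _ = σstar := Real.mul_self_sqrt hσstar.le
    exact mul_le_mul_of_nonneg_right h3 (abs_nonneg _)
  have hTT_mean : ∀ l ∈ Icc 1 n, ∀ l' ∈ Icc 1 n,
      ∫ ω, (σw l ω * ξ l ω) * (σw l' ω * ξ l' ω) ∂ℙ = (if l = l' then Es l else 0) := by
    intro l hl l' hl'
    have h1 := (hind_prod l hl l' hl').integral_mul_eq_mul_integral
      ((hmσ l).mul (hmσ l')).aestronglyMeasurable ((hmξ l).mul (hmξ l')).aestronglyMeasurable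
    have e0 : ∫ ω, (σw l ω * ξ l ω) * (σw l' ω * ξ l' ω) ∂ℙ
        = ∫ ω, ((fun ω => σw l ω * σw l' ω) * (fun ω => ξ l ω * ξ l' ω)) ω ∂ℙ := by
      refine integral_congr_ae ?_
      filter_upwards with ω
      show σw l ω * ξ l ω * (σw l' ω * ξ l' ω) = σw l ω * σw l' ω * (ξ l ω * ξ l' ω)
      ring
    rw [e0, h1]
    by_cases h : l = l'
    · subst h
      rw [if_pos rfl]
      have e1 : ∫ ω, σw l ω * σw l ω ∂ℙ = Es l := by
        rw [hEs]
        refine integral_congr_ae ?_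
        filter_upwards with ω
        exact (sq (σw l ω)).symm
      have e2 : ∫ ω, ξ l ω * ξ l ω ∂ℙ = 1 := by
        rw [← hxi_var l hl]
        refine integral_congr_ae ?_
        filter_upwards with ω
        exact (sq (ξ l ω)).symm
      have e1' : ∫ ω, (fun ω => σw l ω * σw l ω) ω ∂ℙ = Es l := e1
      have e2' : ∫ ω, (fun ω => ξ l ω * ξ l ω) ω ∂ℙ = 1 := e2
      rw [e1', e2', mul_one]
    · rw [if_neg h]
      have e2' : ∫ ω, (fun ω => ξ l ω * ξ l' ω) ω ∂ℙ = 0 := hxi_mul_mean l hl l' hl' h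
      rw [e2', mul_zero]
  -- ## facts about zeta
  have hZ_int : ∀ j, Integrable (fun ω => zeta ξ σw n j ω) ℙ := by
    intro j
    show Integrable (fun ω => (n:ℝ)⁻¹ * ∑ l ∈ Icc 1 n,
      (σw l ω * ξ l ω) * phi j ((l:ℝ)/n)) ℙ
    exact (integrable_finset_sum _ fun l hl => (hT_int l hl).mul_const _).const_mul _
  have hZ_mean : ∀ j, ∫ ω, zeta ξ σw n j ω ∂ℙ = 0 := by
    intro j
    show ∫ ω, (n:ℝ)⁻¹ * ∑ l ∈ Icc 1 n, (σw l ω * ξ l ω) * phi j ((l:ℝ)/n) ∂ℙ = 0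
    rw [integral_const_mul, integral_finset_sum _ (fun l hl => (hT_int l hl).mul_const _)]
    rw [Finset.sum_eq_zero fun l hl => by rw [integral_mul_const, hT_mean l hl, zero_mul]]
    rw [mul_zero]
  have hZsq_eq : ∀ j, (fun ω => (zeta ξ σw n j ω)^2) = fun ω => (n:ℝ)⁻¹ * (n:ℝ)⁻¹ *
      ∑ l ∈ Icc 1 n, ∑ l' ∈ Icc 1 n, (phi j ((l:ℝ)/n) * phi j ((l':ℝ)/n))
        * ((σw l ω * ξ l ω) * (σw l' ω * ξ l' ω)) := by
    intro j
    funext ω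
    show ((n:ℝ)⁻¹ * ∑ l ∈ Icc 1 n, (σw l ω * ξ l ω) * phi j ((l:ℝ)/n))^2 = _
    rw [sq, mul_mul_mul_comm, Finset.sum_mul_sum]
    congr 1
    refine Finset.sum_congr rfl fun l _ => Finset.sum_congr rfl fun l' _ => by ring
  have hZsq_int : ∀ j, Integrable (fun ω => (zeta ξ σw n j ω)^2) ℙ := by
    intro j
    rw [hZsq_eq j]
    exact (integrable_finset_sum _ fun l hl => integrable_finset_sum _ fun l' hl' =>
      (hTT_int l hl l' hl').const_mul _).const_mul _
  have hZsq_mean : ∀ j, ∫ ω, (zeta ξ σw n j ω)^2 ∂ℙ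
      = (n:ℝ)⁻¹ * (n:ℝ)⁻¹ * ∑ l ∈ Icc 1 n, (phi j ((l:ℝ)/n))^2 * Es l := by
    intro j
    rw [hZsq_eq j, integral_const_mul,
      integral_finset_sum _ (fun l hl => integrable_finset_sum _ fun l' hl' =>
        (hTT_int l hl l' hl').const_mul _)]
    congr 1
    refine Finset.sum_congr rfl fun l hl => ?_
    rw [integral_finset_sum _ (fun l' hl' => (hTT_int l hl l' hl').const_mul _)]
    rw [Finset.sum_congr rfl (fun l' hl' => by
      rw [integral_const_mul, hTT_mean l hl l' hl'])]
    rw [Finset.sum_eq_single_of_mem l hl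
      (fun l' hl' hne => by rw [if_neg (fun h => hne h.symm), mul_zero])]
    rw [if_pos rfl]
    ring
  -- ## L² facts
  have hT_L2 : ∀ l ∈ Icc 1 n, MemLp (fun ω => σw l ω * ξ l ω) 2 ℙ := by
    intro l hl
    refine (memLp_two_iff_integrable_sq ((hmσ l).mul (hmξ l)).aestronglyMeasurable).mpr ?_
    have e : (fun ω => (σw l ω * ξ l ω)^2)
        = fun ω => (σw l ω * ξ l ω) * (σw l ω * ξ l ω) := funext fun ω => sq _
    show Integrable (fun ω => (σw l ω * ξ l ω)^2) ℙ
    rw [e]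
    exact hTT_int l hl l hl
  have hZ_L2 : ∀ j, MemLp (fun ω => zeta ξ σw n j ω) 2 ℙ := by
    intro j
    show MemLp (fun ω => (n:ℝ)⁻¹ * ∑ l ∈ Icc 1 n, (σw l ω * ξ l ω) * phi j ((l:ℝ)/n)) 2 ℙ
    refine (memLp_finsetSum (ε' := ℝ) _ fun l hl => ?_).const_mul _
    have e : (fun ω => (σw l ω * ξ l ω) * phi j ((l:ℝ)/n))
        = fun ω => phi j ((l:ℝ)/n) * (σw l ω * ξ l ω) := funext fun ω => mul_comm _ _
    rw [e]
    exact (hT_L2 l hl).const_mul _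
  have hθ_L2 : ∀ j, MemLp (fun ω => thetaHat S ξ σw n j ω) 2 ℙ := by
    intro j
    have e : (fun ω => thetaHat S ξ σw n j ω)
        = fun ω => thetaS S n j + zeta ξ σw n j ω :=
      funext fun ω => thetaHat_split S ξ σw n j ω
    rw [e]
    exact (memLp_const (thetaS S n j)).add (hZ_L2 j)
  have hG_L2 : ∀ l : ℕ,
      MemLp (fun ω => Shat S ξ σw n lam ω ((l:ℝ)/n) - S ((l:ℝ)/n)) 2 ℙ := by
    intro l
    show MemLp (fun ω => (∑ j ∈ Icc 1 n,
      lam j * thetaHat S ξ σw n j ω * phi j ((l:ℝ)/n)) - S ((l:ℝ)/n)) 2 ℙ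
    refine MemLp.sub ?_ (memLp_const _)
    refine memLp_finsetSum (ε' := ℝ) _ fun j hj => ?_
    have e : (fun ω => lam j * thetaHat S ξ σw n j ω * phi j ((l:ℝ)/n))
        = fun ω => (lam j * phi j ((l:ℝ)/n)) * thetaHat S ξ σw n j ω :=
      funext fun ω => by ring
    rw [e]
    exact (hθ_L2 j).const_mul _
  have hEmp_int : Integrable
      (fun ω => empNormSq n (fun x => Shat S ξ σw n lam ω x - S x)) ℙ := by
    show Integrable (fun ω => (n:ℝ)⁻¹ * ∑ l ∈ Icc 1 n,
      (Shat S ξ σw n lam ω ((l:ℝ)/n) - S ((l:ℝ)/n))^2) ℙ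
    exact (integrable_finset_sum _ fun l hl => (hG_L2 l).integrable_sq).const_mul _
  -- ## sup bounds
  set A := ∑ j ∈ Finset.Icc 1 n, (lam j)^2 with hA
  set U := uval n Λ 2 with hU
  have hne1 : Nonempty {x // x ∈ Λ} := ⟨⟨lam, hlam⟩⟩
  have hone : (1:ℕ) ∈ Icc 1 n := by rw [Finset.mem_Icc]; omega
  have hne2 : Nonempty {x // x ∈ Icc 1 n} := ⟨⟨1, hone⟩⟩
  have hUb : ∀ l ∈ Icc 1 n,
      |∑ j ∈ Icc 1 n, (lam j)^2 * ((phi j ((l:ℝ)/n))^2 - 1)| ≤ U := by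
    intro l hl
    have h1 : |∑ j ∈ Icc 1 n, (lam j)^2 * ((phi j ((l:ℝ)/n))^2 - 1)|
        ≤ ⨆ l' : Icc 1 n, |∑ j ∈ Icc 1 n, (lam j)^2 * ((phi j (((l' : ℕ):ℝ)/n))^2 - 1)| :=
      le_ciSup (f := fun l' : Icc 1 n =>
          |∑ j ∈ Icc 1 n, (lam j)^2 * ((phi j (((l' : ℕ):ℝ)/n))^2 - 1)|)
        (Set.Finite.bddAbove (Set.finite_range _)) (⟨l, hl⟩ : Icc 1 n)
    refine h1.trans ?_
    rw [hU]
    exact le_ciSup (f := fun lam' : Λ => ⨆ l' : Icc 1 n,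
        |∑ j ∈ Icc 1 n, ((lam' : ℕ → ℝ) j)^2 * ((phi j (((l' : ℕ):ℝ)/n))^2 - 1)|)
      (Set.Finite.bddAbove (Set.finite_range _)) (⟨lam, hlam⟩ : Λ)
  have hU0 : 0 ≤ U := le_trans (abs_nonneg _) (hUb 1 hone)
  have hA0 : 0 ≤ A := Finset.sum_nonneg fun j _ => sq_nonneg _
  have hv : A ≤ vval n Λ := by
    have h1 : A ≤ ∑ j ∈ Icc 1 n, lam j := by
      rw [hA]
      refine Finset.sum_le_sum fun j hj => ?_
      obtain ⟨h0, h1⟩ := hΛ01 lam hlam j hj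
      nlinarith
    refine h1.trans ?_
    exact le_ciSup (f := fun lam' : Λ => ∑ j ∈ Icc 1 n, (lam' : ℕ → ℝ) j)
      (Set.Finite.bddAbove (Set.finite_range _)) (⟨lam, hlam⟩ : Λ)
  have hv0 : 0 ≤ vval n Λ := hA0.trans hv
  -- ## the correction term R
  set R : Ω → ℝ := fun ω => ∑ j ∈ Icc 1 n,
    ((2*((lam j - 1) * thetaS S n j * lam j)) * zeta ξ σw n j ω
      + (lam j)^2 * (zeta ξ σw n j ω)^2) with hRdef
  have hR_int : Integrable R ℙ := by
    rw [hRdef]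
    exact integrable_finset_sum _ fun j hj =>
      ((hZ_int j).const_mul _).add ((hZsq_int j).const_mul _)
  have hR_pt : ∀ ω, R ω ≤ empNormSq n (fun x => Shat S ξ σw n lam ω x - S x) := by
    intro ω
    refine le_trans ?_ (coeff_bound S ξ σw n hn1 hodd lam ω)
    rw [hRdef]
    refine Finset.sum_le_sum fun j hj => ?_
    rw [thetaHat_split S ξ σw n j ω]
    nlinarith [sq_nonneg ((lam j - 1) * thetaS S n j)]
  have hR_mean : ∫ ω, R ω ∂ℙ = ∑ j ∈ Icc 1 n, (lam j)^2
      * ((n:ℝ)⁻¹ * (n:ℝ)⁻¹ * ∑ l ∈ Icc 1 n, (phi j ((l:ℝ)/n))^2 * Es l) := by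
    show ∫ ω, ∑ j ∈ Icc 1 n, ((2*((lam j - 1) * thetaS S n j * lam j)) * zeta ξ σw n j ω
      + (lam j)^2 * (zeta ξ σw n j ω)^2) ∂ℙ = _
    rw [integral_finset_sum (μ := ℙ) (f := fun j ω =>
        (2*((lam j - 1) * thetaS S n j * lam j)) * zeta ξ σw n j ω
          + (lam j)^2 * (zeta ξ σw n j ω)^2) _
      (fun j _ => ((hZ_int j).const_mul _).add ((hZsq_int j).const_mul _))]
    refine Finset.sum_congr rfl fun j hj => ?_
    rw [integral_add ((hZ_int j).const_mul _) ((hZsq_int j).const_mul _),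
      integral_const_mul, integral_const_mul, hZ_mean j, hZsq_mean j, mul_zero, zero_add]
  -- ## varsigma integral
  have hvs_int : Integrable (fun ω => varsigmaN σw n ω) ℙ := by
    show Integrable (fun ω => (n:ℝ)⁻¹ * ∑ l ∈ Icc 1 n, (σw l ω)^2) ℙ
    exact (integrable_finset_sum _ fun l hl => hσsq_int l hl).const_mul _
  have hvs_mean : ∫ ω, varsigmaN σw n ω ∂ℙ = (n:ℝ)⁻¹ * ∑ l ∈ Icc 1 n, Es l := by
    show ∫ ω, (n:ℝ)⁻¹ * ∑ l ∈ Icc 1 n, (σw l ω)^2 ∂ℙ = _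
    rw [integral_const_mul, integral_finset_sum _ (fun l hl => hσsq_int l hl)]
  -- ## core inequality
  have hcore : A * (∫ ω, varsigmaN σw n ω ∂ℙ) / n
      ≤ (∫ ω, empNormSq n (fun x => Shat S ξ σw n lam ω x - S x) ∂ℙ) + σstar * U / n := by
    have hmono := integral_mono hR_int hEmp_int hR_pt
    have hswap : ∫ ω, R ω ∂ℙ = (n:ℝ)⁻¹ * (n:ℝ)⁻¹
        * ∑ l ∈ Icc 1 n, (∑ j ∈ Icc 1 n, (lam j)^2 * (phi j ((l:ℝ)/n))^2) * Es l := by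
      rw [hR_mean]
      calc ∑ j ∈ Icc 1 n, (lam j)^2 * ((n:ℝ)⁻¹*(n:ℝ)⁻¹
              * ∑ l ∈ Icc 1 n, (phi j ((l:ℝ)/n))^2 * Es l)
          = (n:ℝ)⁻¹*(n:ℝ)⁻¹ * ∑ j ∈ Icc 1 n, ∑ l ∈ Icc 1 n,
              ((lam j)^2 * (phi j ((l:ℝ)/n))^2) * Es l := by
            rw [Finset.mul_sum]
            refine Finset.sum_congr rfl fun j _ => ?_
            rw [Finset.mul_sum, Finset.mul_sum, Finset.mul_sum]
            refine Finset.sum_congr rfl fun l _ => by ring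
        _ = (n:ℝ)⁻¹*(n:ℝ)⁻¹ * ∑ l ∈ Icc 1 n,
              (∑ j ∈ Icc 1 n, (lam j)^2 * (phi j ((l:ℝ)/n))^2) * Es l := by
            rw [Finset.sum_comm]
            congr 1
            refine Finset.sum_congr rfl fun l _ => ?_
            rw [Finset.sum_mul]
    have hsl : ∀ l ∈ Icc 1 n, A * Es l - σstar * U
        ≤ (∑ j ∈ Icc 1 n, (lam j)^2 * (phi j ((l:ℝ)/n))^2) * Es l := by
      intro l hl
      have hdiff : (∑ j ∈ Icc 1 n, (lam j)^2 * (phi j ((l:ℝ)/n))^2) - A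
          = ∑ j ∈ Icc 1 n, (lam j)^2 * ((phi j ((l:ℝ)/n))^2 - 1) := by
        rw [hA, ← Finset.sum_sub_distrib]
        refine Finset.sum_congr rfl fun j _ => by ring
      have h2 := (abs_le.mp (hUb l hl)).1
      nlinarith [hEs_nonneg l, hEs_le l hl, hU0]
    have h4 : ∑ l ∈ Icc 1 n, (A * Es l - σstar * U)
        = A * ∑ l ∈ Icc 1 n, Es l - (n:ℝ) * (σstar * U) := by
      rw [Finset.sum_sub_distrib, ← Finset.mul_sum, Finset.sum_const, Nat.card_Icc,
        Nat.add_sub_cancel, nsmul_eq_mul]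
    have hlow : A * ((n:ℝ)⁻¹ * ∑ l ∈ Icc 1 n, Es l) / n - σstar * U / n
        ≤ ∫ ω, R ω ∂ℙ := by
      rw [hswap]
      have h3 : ∑ l ∈ Icc 1 n, (A * Es l - σstar * U)
          ≤ ∑ l ∈ Icc 1 n, (∑ j ∈ Icc 1 n, (lam j)^2 * (phi j ((l:ℝ)/n))^2) * Es l :=
        Finset.sum_le_sum hsl
      calc A * ((n:ℝ)⁻¹ * ∑ l ∈ Icc 1 n, Es l) / n - σstar * U / n
          = (n:ℝ)⁻¹*(n:ℝ)⁻¹ * (A * ∑ l ∈ Icc 1 n, Es l - (n:ℝ)*(σstar * U)) := by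
            field_simp
        _ ≤ (n:ℝ)⁻¹*(n:ℝ)⁻¹ * ∑ l ∈ Icc 1 n,
              (∑ j ∈ Icc 1 n, (lam j)^2 * (phi j ((l:ℝ)/n))^2) * Es l := by
            refine mul_le_mul_of_nonneg_left ?_ (by positivity)
            rw [← h4]
            exact h3
    rw [hvs_mean]
    linarith [hmono, hlow]
  -- ## final assembly
  have hLHS : ∫ ω, A * ςhat ω / n ∂ℙ = (A / n) * ∫ ω, ςhat ω ∂ℙ := by
    rw [show (fun ω => A * ςhat ω / n) = fun ω => (A/n) * ςhat ω from
      funext fun ω => by ring]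
    exact integral_const_mul _ _
  have habs0 : 0 ≤ ∫ ω, |ςhat ω - varsigmaN σw n ω| ∂ℙ :=
    integral_nonneg fun ω => abs_nonneg _
  by_cases hci : Integrable ςhat ℙ
  · have habs_int : Integrable (fun ω => |ςhat ω - varsigmaN σw n ω|) ℙ :=
      (hci.sub hvs_int).abs
    have hle : ∫ ω, ςhat ω ∂ℙ
        ≤ (∫ ω, varsigmaN σw n ω ∂ℙ) + ∫ ω, |ςhat ω - varsigmaN σw n ω| ∂ℙ := by
      rw [← integral_add hvs_int habs_int]
      refine integral_mono hci (hvs_int.add habs_int) fun ω => ?_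
      show ςhat ω ≤ varsigmaN σw n ω + |ςhat ω - varsigmaN σw n ω|
      have := le_abs_self (ςhat ω - varsigmaN σw n ω)
      linarith
    rw [hLHS]
    have hstep : (A/n) * ∫ ω, ςhat ω ∂ℙ
        ≤ (A/n) * ((∫ ω, varsigmaN σw n ω ∂ℙ) + ∫ ω, |ςhat ω - varsigmaN σw n ω| ∂ℙ) :=
      mul_le_mul_of_nonneg_left hle (div_nonneg hA0 hn0.le)
    have h5 : (A/n) * ∫ ω, |ςhat ω - varsigmaN σw n ω| ∂ℙ
        ≤ (vval n Λ / n) * ∫ ω, |ςhat ω - varsigmaN σw n ω| ∂ℙ :=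
      mul_le_mul_of_nonneg_right ((div_le_div_iff_of_pos_right hn0).mpr hv) habs0
    have h6 : (A/n) * ((∫ ω, varsigmaN σw n ω ∂ℙ) + ∫ ω, |ςhat ω - varsigmaN σw n ω| ∂ℙ)
        = A * (∫ ω, varsigmaN σw n ω ∂ℙ) / n
          + (A/n) * ∫ ω, |ςhat ω - varsigmaN σw n ω| ∂ℙ := by ring
    linarith [hcore, hstep, h5, h6]
  · rw [hLHS, integral_undef hci, mul_zero]
    have h6 : 0 ≤ ∫ ω, empNormSq n (fun x => Shat S ξ σw n lam ω x - S x) ∂ℙ := by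
      refine integral_nonneg fun ω => ?_
      show (0:ℝ) ≤ (n:ℝ)⁻¹ * ∑ l ∈ Icc 1 n, (Shat S ξ σw n lam ω ((l:ℝ)/n) - S ((l:ℝ)/n))^2
      positivity
    have h8 : 0 ≤ σstar * U / n := by positivity
    have h9 : 0 ≤ vval n Λ / n * ∫ ω, |ςhat ω - varsigmaN σw n ω| ∂ℙ :=
      mul_nonneg (div_nonneg hv0 hn0.le) habs0
    linarith
end

section
/- In the heteroscedastic regression model with odd n, for any real numbers f_1,…,f_n: E (Σ_{j=1}^n f_j ξ_{j,n})² ≤ σ_* Σ_{j=1}^n f_j², where ξ_{j,n} = n^{-1/2} Σ_{l=1}^n σ_l ξ_l φ_j(l/n). -/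
open Finset MeasureTheory ProbabilityTheory

/-- `ξ_{j,n} = n^{-1/2} Σ_{l=1}^n σ_l ξ_l φ_j(l/n)`. -/
noncomputable def xiJN {Ω : Type*} (ξ σw : ℕ → Ω → ℝ) (n j : ℕ) (ω : Ω) : ℝ :=
  (Real.sqrt n)⁻¹ * ∑ l ∈ Finset.Icc 1 n, σw l ω * ξ l ω * phi j ((l : ℝ) / n)

section Aux
open Real


lemma sum_cos_eq_zero (n : ℕ) (hpos : 0 < n) (d : ℤ) (hd : ¬ (n:ℤ) ∣ d) :
    ∑ k ∈ range n, Real.cos (2 * π * d * k / n) = 0 := by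
  set θ : ℝ := 2 * π * d / n with hθ
  have key : ∑ k ∈ range n, Complex.exp (θ * Complex.I) ^ k = 0 := by
    have hz : Complex.exp (θ * Complex.I) ^ n = 1 := by
      rw [← Complex.exp_nat_mul]
      have : (n : ℂ) * (θ * Complex.I) = d * (2 * π * Complex.I) := by
        rw [hθ]
        push_cast
        have hn : (n : ℂ) ≠ 0 := Nat.cast_ne_zero.mpr hpos.ne'
        field_simp
      rw [this, Complex.exp_int_mul_two_pi_mul_I]
    have hz1 : Complex.exp (θ * Complex.I) ≠ 1 := by
      intro h
      rw [Complex.exp_eq_one_iff] at h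
      obtain ⟨m, hm⟩ := h
      have hI : (Complex.I : ℂ) ≠ 0 := Complex.I_ne_zero
      have h2 : (θ : ℂ) = m * (2 * π) := by
        have : (θ : ℂ) * Complex.I = (m * (2 * π)) * Complex.I := by
          rw [hm]; ring
        exact mul_right_cancel₀ hI this
      have h3 : θ = m * (2 * π) := by
        exact_mod_cast h2
      apply hd
      refine ⟨m, ?_⟩
      have hn : (n : ℝ) ≠ 0 := Nat.cast_ne_zero.mpr hpos.ne'
      have hπ : (π : ℝ) ≠ 0 := Real.pi_ne_zero
      rw [hθ] at h3
      have : (d : ℝ) = n * m := by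
        field_simp at h3
        have hπpos := Real.pi_pos
        nlinarith [h3]
      exact_mod_cast this
    have := geom_sum_eq hz1 n
    rw [this, hz, sub_self, zero_div]
  have hre : ∀ k : ℕ, (Complex.exp (θ * Complex.I) ^ k).re
      = Real.cos (2 * π * d * k / n) := by
    intro k
    rw [← Complex.exp_nat_mul]
    have : (k : ℂ) * (θ * Complex.I) = ((2 * π * d * k / n : ℝ) : ℂ) * Complex.I := by
      rw [hθ]; push_cast; ring
    rw [this, Complex.exp_ofReal_mul_I_re]
  calc ∑ k ∈ range n, Real.cos (2 * π * d * k / n)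
      = (∑ k ∈ range n, Complex.exp (θ * Complex.I) ^ k).re := by
        rw [Complex.re_sum]; exact (Finset.sum_congr rfl fun k _ => (hre k).symm)
    _ = 0 := by rw [key, Complex.zero_re]


lemma sum_pair (g : ℕ → ℝ) (t : ℕ) :
    ∑ j ∈ Icc 2 (2*t+1), g j = ∑ k ∈ Icc 1 t, (g (2*k) + g (2*k+1)) := by
  induction t with
  | zero => simp
  | succ t ih =>
    have h1 : Icc 2 (2*(t+1)+1) = insert (2*t+3) (insert (2*t+2) (Icc 2 (2*t+1))) := by
      ext x; simp; omega
    have h2 : Icc 1 (t+1) = insert (t+1) (Icc 1 t) := by ext x; simp; omega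
    have e3 : 2*(t+1)+1 = 2*t+3 := by ring
    have e2 : 2*(t+1) = 2*t+2 := by ring
    rw [h1, h2, Finset.sum_insert (by simp), Finset.sum_insert (by simp only [Finset.mem_insert, Finset.mem_Icc]; omega),
      Finset.sum_insert (by simp), ih, e3, e2]
    ring

lemma sum_reflect (C : ℕ → ℝ) (t : ℕ) (hsym : ∀ k ∈ Icc 1 t, C (2*t+1-k) = C k) :
    ∑ k ∈ range (2*t+1), C k = C 0 + 2 * ∑ k ∈ Icc 1 t, C k := by
  have h0 : range (2*t+1) = insert 0 (Icc 1 (2*t)) := by ext x; simp; omega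
  have h1 : Icc 1 (2*t) = Icc 1 t ∪ Icc (t+1) (2*t) := by ext x; simp; omega
  have hdisj : Disjoint (Icc 1 t) (Icc (t+1) (2*t)) := by
    rw [Finset.disjoint_left]; intro a ha hb; simp at ha hb; omega
  have h2 : ∑ k ∈ Icc (t+1) (2*t), C k = ∑ k ∈ Icc 1 t, C k := by
    refine Finset.sum_nbij' (fun k => 2*t+1-k) (fun k => 2*t+1-k) ?_ ?_ ?_ ?_ ?_
    · intro a ha; simp only [Finset.mem_Icc] at ha ⊢; omega
    · intro a ha; simp only [Finset.mem_Icc] at ha ⊢; omega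
    · intro a ha; simp only [Finset.mem_Icc] at ha
      show 2*t+1-(2*t+1-a) = a; omega
    · intro a ha; simp only [Finset.mem_Icc] at ha
      show 2*t+1-(2*t+1-a) = a; omega
    · intro a ha; simp only [Finset.mem_Icc] at ha
      have h := hsym (2*t+1-a) (by simp only [Finset.mem_Icc]; omega)
      rwa [show 2*t+1-(2*t+1-a) = a by omega] at h
  rw [h0, Finset.sum_insert (by simp), h1, Finset.sum_union hdisj, h2]
  ring

lemma phi_kernel (n : ℕ) (hodd : Odd n) (l m : ℕ) (hl : l ∈ Icc 1 n) (hm : m ∈ Icc 1 n) :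
    ∑ j ∈ Icc 1 n, phi j ((l:ℝ)/n) * phi j ((m:ℝ)/n) = if l = m then (n:ℝ) else 0 := by
  obtain ⟨t, ht⟩ := hodd
  subst ht
  simp only [Finset.mem_Icc] at hl hm
  have hnR : ((2*t+1 : ℕ) : ℝ) ≠ 0 := by positivity
  set x : ℝ := (l:ℝ)/(2*t+1 : ℕ) with hx
  set y : ℝ := (m:ℝ)/(2*t+1 : ℕ) with hy
  have hsplit : Icc 1 (2*t+1) = insert 1 (Icc 2 (2*t+1)) := by ext a; simp; omega
  rw [hsplit, Finset.sum_insert (by simp), sum_pair]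
  have hφ1 : phi 1 x * phi 1 y = 1 := by simp [phi]
  have hpair : ∀ k ∈ Icc 1 t,
      phi (2*k) x * phi (2*k) y + phi (2*k+1) x * phi (2*k+1) y
        = 2 * Real.cos (2 * π * k * (x - y)) := by
    intro k hk
    simp only [Finset.mem_Icc] at hk
    have h2k : (2*k) ≠ 1 := by omega
    have h2k1 : (2*k+1) ≠ 1 := by omega
    have e1 : (2*k) % 2 = 0 := by omega
    have e2 : (2*k+1) % 2 = 1 := by omega
    have d1 : (2*k) / 2 = k := by omega
    have d2 : (2*k+1) / 2 = k := by omega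
    simp only [phi, if_neg h2k, if_neg h2k1, e1, e2, if_pos rfl, d1, d2]
    have hs2 : Real.sqrt 2 * Real.sqrt 2 = 2 := Real.mul_self_sqrt (by norm_num)
    have hcs := Real.cos_sub (2 * π * k * x) (2 * π * k * y)
    have harg : 2 * π * k * x - 2 * π * k * y = 2 * π * k * (x - y) := by ring
    rw [harg] at hcs
    calc Real.sqrt 2 * Real.cos (2 * π * k * x) * (Real.sqrt 2 * Real.cos (2 * π * k * y))
          + Real.sqrt 2 * Real.sin (2 * π * k * x) * (Real.sqrt 2 * Real.sin (2 * π * k * y))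
        = (Real.sqrt 2 * Real.sqrt 2) * (Real.cos (2 * π * k * x) * Real.cos (2 * π * k * y)
            + Real.sin (2 * π * k * x) * Real.sin (2 * π * k * y)) := by ring
      _ = 2 * Real.cos (2 * π * k * (x - y)) := by rw [hs2, hcs]
  rw [Finset.sum_congr rfl hpair, hφ1]
  by_cases hlm : l = m
  · subst hlm
    simp only [if_pos rfl]
    have : ∀ k ∈ Icc 1 t, 2 * Real.cos (2 * π * k * (x - y)) = 2 := by
      intro k hk; rw [hx, hy]; simp
    rw [Finset.sum_congr rfl this, Finset.sum_const, Nat.card_Icc]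
    push_cast
    ring
  · simp only [if_neg hlm]
    set d : ℤ := (l:ℤ) - m with hd
    have hd0 : d ≠ 0 := by omega
    have hdlt : ¬ ((2*t+1 : ℕ) : ℤ) ∣ d := by
      intro ⟨c, hc⟩
      push_cast at hc
      have hb1 : -(2*(t:ℤ)) ≤ d := by omega
      have hb2 : d ≤ 2*(t:ℤ) := by omega
      rcases lt_trichotomy c 0 with h|h|h
      · have := mul_le_mul_of_nonneg_left (show c ≤ -1 by omega)
          (show (0:ℤ) ≤ 2*(t:ℤ)+1 by positivity)
        linarith
      · subst h; simp at hc; omega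
      · have := mul_le_mul_of_nonneg_left (show 1 ≤ c by omega)
          (show (0:ℤ) ≤ 2*(t:ℤ)+1 by positivity)
        linarith
    have key := sum_cos_eq_zero (2*t+1) (by omega) d hdlt
    set C : ℕ → ℝ := fun k => Real.cos (2 * π * d * k / (2*t+1 : ℕ)) with hC
    have hsym : ∀ k ∈ Icc 1 t, C (2*t+1-k) = C k := by
      intro k hk
      simp only [Finset.mem_Icc] at hk
      rw [hC]
      have hcast : ((2*t+1-k : ℕ) : ℝ) = ((2*t+1 : ℕ):ℝ) - k := by
        push_cast [Nat.cast_sub (by omega : k ≤ 2*t+1)]; ring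
      simp only [hcast]
      have harg : 2 * π * d * (((2*t+1:ℕ):ℝ) - k) / ((2*t+1:ℕ):ℝ)
          = d * (2 * π) - 2 * π * d * k / ((2*t+1:ℕ):ℝ) := by
        field_simp
      rw [harg, Real.cos_int_mul_two_pi_sub]
    have hrefl := sum_reflect C t hsym
    have hC0 : C 0 = 1 := by simp [hC]
    have hkey2 : (0:ℝ) = 1 + 2 * ∑ k ∈ Icc 1 t, C k := by
      rw [← hC0, ← hrefl]
      exact key.symm
    have hCeq : ∀ k ∈ Icc 1 t, 2 * Real.cos (2 * π * k * (x - y)) = 2 * C k := by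
      intro k hk
      rw [hC]
      congr 1
      congr 1
      rw [hx, hy, hd]
      push_cast
      field_simp
    rw [Finset.sum_congr rfl hCeq, ← Finset.mul_sum] at *
    linarith [hkey2]



lemma fin_sum_eq_Icc (n : ℕ) (g : ℕ → ℝ) :
    ∑ j : Fin n, g (j.1+1) = ∑ j ∈ Icc 1 n, g j := by
  rw [Fin.sum_univ_eq_sum_range (fun k => g (k+1)) n]
  refine Finset.sum_nbij' (fun k => k+1) (fun k => k-1) ?_ ?_ ?_ ?_ ?_
  · intro a ha; simp only [Finset.mem_range] at ha; simp only [Finset.mem_Icc]; omega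
  · intro a ha; simp only [Finset.mem_Icc] at ha; simp only [Finset.mem_range]; omega
  · intro a ha; simp only [Finset.mem_range] at ha; show a+1-1 = a; omega
  · intro a ha; simp only [Finset.mem_Icc] at ha; show a-1+1 = a; omega
  · intro a ha; rfl

lemma phi_col_orth (n : ℕ) (hodd : Odd n) (hpos : 0 < n) (i j : ℕ)
    (hi : i ∈ Icc 1 n) (hj : j ∈ Icc 1 n) :
    ∑ l ∈ Icc 1 n, phi i ((l:ℝ)/n) * phi j ((l:ℝ)/n) = if i = j then (n:ℝ) else 0 := by
  set M : Matrix (Fin n) (Fin n) ℝ :=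
    fun l k => phi (k.1+1) (((l.1+1 : ℕ):ℝ)/n) with hM
  have h1 : M * M.transpose = (n:ℝ) • 1 := by
    ext l m
    rw [Matrix.mul_apply]
    simp only [Matrix.transpose_apply, Matrix.smul_apply, Matrix.one_apply]
    have := fin_sum_eq_Icc n (fun k => phi k (((l.1+1 : ℕ):ℝ)/n) * phi k (((m.1+1 : ℕ):ℝ)/n))
    rw [hM]
    simp only []
    rw [this, phi_kernel n hodd _ _ (by simp [Finset.mem_Icc]) (by simp [Finset.mem_Icc])]
    have : l.1 + 1 = m.1 + 1 ↔ l = m := by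
      constructor
      · intro h; exact Fin.ext (by omega)
      · intro h; rw [h]
    by_cases h : l = m <;> simp [h, this, Fin.val_inj]
  have hn0 : (n:ℝ) ≠ 0 := Nat.cast_ne_zero.mpr hpos.ne'
  have hinv : M * ((n:ℝ)⁻¹ • M.transpose) = 1 := by
    rw [Matrix.mul_smul, h1, smul_smul, inv_mul_cancel₀ hn0, one_smul]
  have h2' : ((n:ℝ)⁻¹ • M.transpose) * M = 1 := mul_eq_one_comm.mp hinv
  have h2 : M.transpose * M = (n:ℝ) • 1 := by
    have := congrArg (fun A => (n:ℝ) • A) h2'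
    simpa [Matrix.smul_mul, smul_smul, mul_inv_cancel₀ hn0] using this
  simp only [Finset.mem_Icc] at hi hj
  set i' : Fin n := ⟨i-1, by omega⟩
  set j' : Fin n := ⟨j-1, by omega⟩
  have key := congrFun (congrFun h2 i') j'
  rw [Matrix.mul_apply] at key
  simp only [Matrix.transpose_apply, Matrix.smul_apply, Matrix.one_apply] at key
  simp only [hM] at key
  have hii : i'.1 + 1 = i := by simp only [i']; omega
  have hjj : j'.1 + 1 = j := by simp only [j']; omega
  rw [hii, hjj] at key
  rw [← fin_sum_eq_Icc n (fun l => phi i ((l:ℝ)/n) * phi j ((l:ℝ)/n)), key]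
  have hiff : i' = j' ↔ i = j := by
    constructor
    · intro h
      have : i'.1 = j'.1 := by rw [h]
      simp only [i', j'] at this; omega
    · intro h; apply Fin.ext; simp only [i', j']; omega
  by_cases h : i = j
  · simp [h, hiff.mpr h]
  · simp only [if_neg h, smul_eq_mul]
    rw [if_neg (fun hc => h (hiff.mp hc)), mul_zero]

lemma phi_parseval (n : ℕ) (hodd : Odd n) (hpos : 0 < n) (f : ℕ → ℝ) :
    ∑ l ∈ Icc 1 n, ((Real.sqrt n)⁻¹ * ∑ j ∈ Icc 1 n, f j * phi j ((l:ℝ)/n))^2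
      = ∑ j ∈ Icc 1 n, (f j)^2 := by
  have hn0 : (0:ℝ) < n := by exact_mod_cast hpos
  have hs : (Real.sqrt n)⁻¹ ^ 2 = (n:ℝ)⁻¹ := by
    rw [← Real.sqrt_inv, Real.sq_sqrt (by positivity)]
  have expand : ∀ l : ℕ, ((Real.sqrt n)⁻¹ * ∑ j ∈ Icc 1 n, f j * phi j ((l:ℝ)/n))^2
      = (n:ℝ)⁻¹ * ∑ i ∈ Icc 1 n, ∑ j ∈ Icc 1 n,
          (f i * f j) * (phi i ((l:ℝ)/n) * phi j ((l:ℝ)/n)) := by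
    intro l
    rw [mul_pow, hs, sq, Finset.sum_mul_sum]
    congr 1
    refine Finset.sum_congr rfl fun i _ => Finset.sum_congr rfl fun j _ => by ring
  rw [Finset.sum_congr rfl (fun l _ => expand l), ← Finset.mul_sum, Finset.sum_comm]
  rw [Finset.sum_congr rfl (fun i hi => Finset.sum_comm (γ := ℕ) ..)]
  have inner : ∀ i ∈ Icc 1 n, ∑ j ∈ Icc 1 n, ∑ l ∈ Icc 1 n,
      (f i * f j) * (phi i ((l:ℝ)/n) * phi j ((l:ℝ)/n)) = (f i)^2 * n := by
    intro i hi
    have : ∀ j ∈ Icc 1 n, ∑ l ∈ Icc 1 n,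
        (f i * f j) * (phi i ((l:ℝ)/n) * phi j ((l:ℝ)/n))
        = (f i * f j) * (if i = j then (n:ℝ) else 0) := by
      intro j hj
      rw [← Finset.mul_sum, phi_col_orth n hodd hpos i j hi hj]
    rw [Finset.sum_congr rfl this]
    have : ∀ x ∈ Icc 1 n, (f i * f x * if i = x then (n:ℝ) else 0)
        = if i = x then f i * f x * n else 0 := by
      intro x _; split_ifs <;> ring
    rw [Finset.sum_congr rfl this, Finset.sum_ite_eq (Icc 1 n) i (fun x => f i * f x * (n:ℝ)),
      if_pos hi]
    ring
  rw [Finset.sum_congr rfl inner, ← Finset.sum_mul]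
  field_simp

end Aux

section AuxP
open Real

variable {Ω : Type*} [MeasureSpace Ω] [IsProbabilityMeasure (ℙ : Measure Ω)]

lemma weighted_sum_sq_le
    (n : ℕ) (hpos : 0 < n)
    (ξ σw : ℕ → Ω → ℝ)
    (hmξ : ∀ l, Measurable (ξ l)) (hmσ : ∀ l, Measurable (σw l))
    (hindepξ : iIndepFun (fun l : Fin n => ξ (l.1 + 1)) ℙ)
    (hident : ∀ l ∈ Finset.Icc 1 n, IdentDistrib (ξ l) (ξ 1) ℙ ℙ)
    (hmean : ∫ ω, ξ 1 ω ∂ℙ = 0)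
    (hvar : ∫ ω, (ξ 1 ω) ^ 2 ∂ℙ = 1)
    (σstar : ℝ) (hσstar : 0 < σstar)
    (hbound : ∀ᵐ ω ∂ℙ, ∀ l ∈ Finset.Icc 1 n, (σw l ω) ^ 2 ≤ σstar)
    (hindepσξ : IndepFun (fun ω => fun l : Fin n => σw (l.1 + 1) ω)
                         (fun ω => fun l : Fin n => ξ (l.1 + 1) ω) ℙ)
    (c : ℕ → ℝ) :
    ∫ ω, (∑ l ∈ Finset.Icc 1 n, c l * (σw l ω * ξ l ω)) ^ 2 ∂ℙ
      ≤ σstar * ∑ l ∈ Finset.Icc 1 n, (c l) ^ 2 := by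
  -- basic integrability of ξ
  have hint12 : Integrable (fun ω => (ξ 1 ω)^2) ℙ := by
    by_contra h
    rw [integral_undef h] at hvar
    norm_num at hvar
  have hintl2 : ∀ l ∈ Finset.Icc 1 n, Integrable (fun ω => (ξ l ω)^2) ℙ := by
    intro l hl
    have hid : IdentDistrib (fun ω => (ξ l ω)^2) (fun ω => (ξ 1 ω)^2) ℙ ℙ :=
      (hident l hl).comp (measurable_id.pow_const 2)
    exact hid.integrable_iff.mpr hint12
  have hmem2 : ∀ l ∈ Finset.Icc 1 n, MemLp (ξ l) 2 ℙ := fun l hl =>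
    (memLp_two_iff_integrable_sq (hmξ l).aestronglyMeasurable).mpr (hintl2 l hl)
  have hint1 : ∀ l ∈ Finset.Icc 1 n, Integrable (ξ l) ℙ := fun l hl =>
    (hmem2 l hl).integrable one_le_two
  have hmeanl : ∀ l ∈ Finset.Icc 1 n, ∫ ω, ξ l ω ∂ℙ = 0 := fun l hl => by
    rw [(hident l hl).integral_eq]; exact hmean
  have hvarl : ∀ l ∈ Finset.Icc 1 n, ∫ ω, (ξ l ω)^2 ∂ℙ = 1 := fun l hl => by
    have hid : IdentDistrib (fun ω => (ξ l ω)^2) (fun ω => (ξ 1 ω)^2) ℙ ℙ :=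
      (hident l hl).comp (measurable_id.pow_const 2)
    rw [hid.integral_eq]; exact hvar
  -- products of ξ's are integrable
  have hξξ : ∀ l ∈ Finset.Icc 1 n, ∀ m ∈ Finset.Icc 1 n,
      Integrable (fun ω => ξ l ω * ξ m ω) ℙ := by
    intro l hl m hm
    refine Integrable.mono' ((hintl2 l hl).add (hintl2 m hm))
      ((hmξ l).mul (hmξ m)).aestronglyMeasurable ?_
    filter_upwards with ω
    have : |ξ l ω * ξ m ω| = |ξ l ω| * |ξ m ω| := abs_mul _ _
    rw [Real.norm_eq_abs, this]
    simp only [Pi.add_apply]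
    nlinarith [abs_nonneg (ξ l ω), abs_nonneg (ξ m ω), sq_abs (ξ l ω), sq_abs (ξ m ω),
      sq_nonneg (|ξ l ω| - |ξ m ω|)]
  -- a.e. bound on |σw l|
  have hσabs : ∀ᵐ ω ∂ℙ, ∀ l ∈ Finset.Icc 1 n, |σw l ω| ≤ Real.sqrt σstar := by
    filter_upwards [hbound] with ω hω l hl
    exact Real.abs_le_sqrt (hω l hl)
  -- σ·σ·ξ·ξ integrable
  have hprod : ∀ l ∈ Finset.Icc 1 n, ∀ m ∈ Finset.Icc 1 n,
      Integrable (fun ω => (σw l ω * σw m ω) * (ξ l ω * ξ m ω)) ℙ := by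
    intro l hl m hm
    refine Integrable.bdd_mul (c := σstar) (hξξ l hl m hm)
      ((hmσ l).mul (hmσ m)).aestronglyMeasurable ?_
    filter_upwards [hσabs] with ω hω
    rw [Real.norm_eq_abs, abs_mul]
    have h1 := hω l hl
    have h2 := hω m hm
    have := Real.sqrt_nonneg σstar
    have hss : Real.sqrt σstar * Real.sqrt σstar = σstar :=
      Real.mul_self_sqrt hσstar.le
    nlinarith [abs_nonneg (σw l ω), abs_nonneg (σw m ω)]
  -- σ·σ integrable
  have hσσ : ∀ l ∈ Finset.Icc 1 n, ∀ m ∈ Finset.Icc 1 n,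
      Integrable (fun ω => σw l ω * σw m ω) ℙ := by
    intro l hl m hm
    refine Integrable.mono' (integrable_const σstar)
      ((hmσ l).mul (hmσ m)).aestronglyMeasurable ?_
    filter_upwards [hσabs] with ω hω
    rw [Real.norm_eq_abs, abs_mul]
    have h1 := hω l hl
    have h2 := hω m hm
    have := Real.sqrt_nonneg σstar
    have hss : Real.sqrt σstar * Real.sqrt σstar = σstar :=
      Real.mul_self_sqrt hσstar.le
    nlinarith [abs_nonneg (σw l ω), abs_nonneg (σw m ω)]
  -- independence of (σσ) and (ξξ)
  have hIσξ : ∀ l ∈ Finset.Icc 1 n, ∀ m ∈ Finset.Icc 1 n,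
      IndepFun (fun ω => σw l ω * σw m ω) (fun ω => ξ l ω * ξ m ω) ℙ := by
    intro l hl m hm
    simp only [Finset.mem_Icc] at hl hm
    set il : Fin n := ⟨l-1, by omega⟩
    set im : Fin n := ⟨m-1, by omega⟩
    have hφ : Measurable (fun v : Fin n → ℝ => v il * v im) :=
      (measurable_pi_apply il).mul (measurable_pi_apply im)
    have h := hindepσξ.comp hφ hφ
    have hl1 : il.1 + 1 = l := by simp only [il]; omega
    have hm1 : im.1 + 1 = m := by simp only [im]; omega
    have e1 : ((fun v : Fin n → ℝ => v il * v im) ∘ (fun ω => fun i : Fin n => σw (i.1+1) ω))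
        = fun ω => σw l ω * σw m ω := by
      funext ω; simp only [Function.comp_apply, hl1, hm1]
    have e2 : ((fun v : Fin n → ℝ => v il * v im) ∘ (fun ω => fun i : Fin n => ξ (i.1+1) ω))
        = fun ω => ξ l ω * ξ m ω := by
      funext ω; simp only [Function.comp_apply, hl1, hm1]
    rwa [e1, e2] at h
  -- cross terms vanish
  have hcross : ∀ l ∈ Finset.Icc 1 n, ∀ m ∈ Finset.Icc 1 n, l ≠ m →
      ∫ ω, (σw l ω * σw m ω) * (ξ l ω * ξ m ω) ∂ℙ = 0 := by
    intro l hl m hm hne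
    have hmul : ∫ ω, (σw l ω * σw m ω) * (ξ l ω * ξ m ω) ∂ℙ
        = (∫ ω, σw l ω * σw m ω ∂ℙ) * ∫ ω, ξ l ω * ξ m ω ∂ℙ :=
      (hIσξ l hl m hm).integral_fun_mul_eq_mul_integral (hσσ l hl m hm).aestronglyMeasurable (hξξ l hl m hm).aestronglyMeasurable
    rw [hmul]
    have hmemIcc := hl
    simp only [Finset.mem_Icc] at hl hm
    set il : Fin n := ⟨l-1, by omega⟩
    set im : Fin n := ⟨m-1, by omega⟩
    have hil : il ≠ im := by
      intro h
      have : il.1 = im.1 := by rw [h]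
      simp only [il, im] at this
      omega
    have h := (hindepξ.indepFun hil).integral_fun_mul_eq_mul_integral ?_ ?_
    · have hl1 : il.1 + 1 = l := by simp only [il]; omega
      have hm1 : im.1 + 1 = m := by simp only [im]; omega
      rw [hl1, hm1] at h
      have h2 : ∫ ω, ξ l ω * ξ m ω ∂ℙ = (∫ ω, ξ l ω ∂ℙ) * ∫ ω, ξ m ω ∂ℙ := h
      rw [h2, hmeanl l hmemIcc, zero_mul, mul_zero]
    · have hl1 : il.1 + 1 = l := by simp only [il]; omega
      rw [hl1]; exact (hint1 l (by simp only [Finset.mem_Icc]; omega)).aestronglyMeasurable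
    · have hm1 : im.1 + 1 = m := by simp only [im]; omega
      rw [hm1]; exact (hint1 m (by simp only [Finset.mem_Icc]; omega)).aestronglyMeasurable
  -- diagonal terms
  have hdiag : ∀ l ∈ Finset.Icc 1 n,
      ∫ ω, (σw l ω * σw l ω) * (ξ l ω * ξ l ω) ∂ℙ ≤ σstar := by
    intro l hl
    have hmul : ∫ ω, (σw l ω * σw l ω) * (ξ l ω * ξ l ω) ∂ℙ
        = (∫ ω, σw l ω * σw l ω ∂ℙ) * ∫ ω, ξ l ω * ξ l ω ∂ℙ :=
      (hIσξ l hl l hl).integral_fun_mul_eq_mul_integral (hσσ l hl l hl).aestronglyMeasurable (hξξ l hl l hl).aestronglyMeasurable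
    rw [hmul]
    have h2 : ∫ ω, ξ l ω * ξ l ω ∂ℙ = 1 := by
      have := hvarl l hl
      rw [← this]
      exact integral_congr_ae (Filter.Eventually.of_forall fun ω => by ring)
    rw [h2, mul_one]
    have hle : ∫ ω, σw l ω * σw l ω ∂ℙ ≤ ∫ (_ : Ω), σstar ∂ℙ := by
      refine integral_mono_ae (hσσ l hl l hl) (integrable_const σstar) ?_
      filter_upwards [hbound] with ω hω
      have := hω l hl
      nlinarith [sq_nonneg (σw l ω)]
    simpa using hle
  -- expansion of the square
  have hexp : ∀ ω, (∑ l ∈ Finset.Icc 1 n, c l * (σw l ω * ξ l ω)) ^ 2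
      = ∑ l ∈ Finset.Icc 1 n, ∑ m ∈ Finset.Icc 1 n,
          (c l * c m) * ((σw l ω * σw m ω) * (ξ l ω * ξ m ω)) := by
    intro ω
    rw [sq, Finset.sum_mul_sum]
    exact Finset.sum_congr rfl fun l _ => Finset.sum_congr rfl fun m _ => by ring
  have hintterm : ∀ l ∈ Finset.Icc 1 n, ∀ m ∈ Finset.Icc 1 n,
      Integrable (fun ω => (c l * c m) * ((σw l ω * σw m ω) * (ξ l ω * ξ m ω))) ℙ :=
    fun l hl m hm => (hprod l hl m hm).const_mul _
  calc ∫ ω, (∑ l ∈ Finset.Icc 1 n, c l * (σw l ω * ξ l ω)) ^ 2 ∂ℙ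
      = ∑ l ∈ Finset.Icc 1 n, ∑ m ∈ Finset.Icc 1 n,
          (c l * c m) * ∫ ω, (σw l ω * σw m ω) * (ξ l ω * ξ m ω) ∂ℙ := by
        rw [integral_congr_ae (Filter.Eventually.of_forall hexp)]
        rw [integral_finset_sum _ (fun l hl => integrable_finset_sum _ (fun m hm => hintterm l hl m hm))]
        refine Finset.sum_congr rfl fun l hl => ?_
        rw [integral_finset_sum _ (fun m hm => hintterm l hl m hm)]
        exact Finset.sum_congr rfl fun m hm => integral_const_mul _ _
    _ = ∑ l ∈ Finset.Icc 1 n,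
          (c l)^2 * ∫ ω, (σw l ω * σw l ω) * (ξ l ω * ξ l ω) ∂ℙ := by
        refine Finset.sum_congr rfl fun l hl => ?_
        rw [Finset.sum_eq_single_of_mem l hl]
        · rw [sq]
        · intro m hm hne
          rw [hcross l hl m hm (fun h => hne h.symm), mul_zero]
    _ ≤ ∑ l ∈ Finset.Icc 1 n, (c l)^2 * σstar := by
        refine Finset.sum_le_sum fun l hl => ?_
        exact mul_le_mul_of_nonneg_left (hdiag l hl) (sq_nonneg _)
    _ = σstar * ∑ l ∈ Finset.Icc 1 n, (c l)^2 := by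
        rw [← Finset.sum_mul, mul_comm]

end AuxP

/-- In the heteroscedastic regression model with odd `n` (i.i.d. noise `(ξ_l)` with
`Eξ₁ = 0`, `Eξ₁² = 1`, and positive volatilities `(σ_l)` independent of `(ξ_l)` with
`max_l σ_l² ≤ σ_*` a.s.), for any real numbers `f_1,…,f_n`:
`E (Σ_{j=1}^n f_j ξ_{j,n})² ≤ σ_* Σ_{j=1}^n f_j²`. -/
theorem xiJN_weighted_second_moment
    {Ω : Type*} [MeasureSpace Ω] [IsProbabilityMeasure (ℙ : Measure Ω)]
    (n : ℕ) (hodd : Odd n) (hpos : 0 < n)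
    (ξ σw : ℕ → Ω → ℝ)
    (hmξ : ∀ l, Measurable (ξ l)) (hmσ : ∀ l, Measurable (σw l))
    (hindepξ : iIndepFun (fun l : Fin n => ξ (l.1 + 1)) ℙ)
    (hident : ∀ l ∈ Finset.Icc 1 n, IdentDistrib (ξ l) (ξ 1) ℙ ℙ)
    (hmean : ∫ ω, ξ 1 ω ∂ℙ = 0)
    (hvar : ∫ ω, (ξ 1 ω) ^ 2 ∂ℙ = 1)
    (hσpos : ∀ l ∈ Finset.Icc 1 n, ∀ᵐ ω ∂ℙ, 0 < σw l ω)
    (σstar : ℝ) (hσstar : 0 < σstar)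
    (hbound : ∀ᵐ ω ∂ℙ, ∀ l ∈ Finset.Icc 1 n, (σw l ω) ^ 2 ≤ σstar)
    (hindepσξ : IndepFun (fun ω => fun l : Fin n => σw (l.1 + 1) ω)
                         (fun ω => fun l : Fin n => ξ (l.1 + 1) ω) ℙ)
    (f : ℕ → ℝ) :
    ∫ ω, (∑ j ∈ Finset.Icc 1 n, f j * xiJN ξ σw n j ω) ^ 2 ∂ℙ
      ≤ σstar * ∑ j ∈ Finset.Icc 1 n, (f j) ^ 2 := by
  set c : ℕ → ℝ := fun l => (Real.sqrt n)⁻¹ * ∑ j ∈ Finset.Icc 1 n, f j * phi j ((l:ℝ)/n)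
    with hc
  have hpt : ∀ ω, ∑ j ∈ Finset.Icc 1 n, f j * xiJN ξ σw n j ω
      = ∑ l ∈ Finset.Icc 1 n, c l * (σw l ω * ξ l ω) := by
    intro ω
    unfold xiJN
    calc ∑ j ∈ Finset.Icc 1 n, f j * ((Real.sqrt n)⁻¹
            * ∑ l ∈ Finset.Icc 1 n, σw l ω * ξ l ω * phi j ((l:ℝ)/n))
        = ∑ j ∈ Finset.Icc 1 n, ∑ l ∈ Finset.Icc 1 n,
            (f j * (Real.sqrt n)⁻¹) * (σw l ω * ξ l ω * phi j ((l:ℝ)/n)) := by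
          refine Finset.sum_congr rfl fun j _ => ?_
          rw [← mul_assoc, Finset.mul_sum]
      _ = ∑ l ∈ Finset.Icc 1 n, ∑ j ∈ Finset.Icc 1 n,
            (f j * (Real.sqrt n)⁻¹) * (σw l ω * ξ l ω * phi j ((l:ℝ)/n)) :=
          Finset.sum_comm
      _ = ∑ l ∈ Finset.Icc 1 n, c l * (σw l ω * ξ l ω) := by
          refine Finset.sum_congr rfl fun l _ => ?_
          rw [hc]
          simp only []
          rw [Finset.mul_sum, Finset.sum_mul]
          refine Finset.sum_congr rfl fun j _ => by ring
  have heq : (fun ω => (∑ j ∈ Finset.Icc 1 n, f j * xiJN ξ σw n j ω) ^ 2)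
      = fun ω => (∑ l ∈ Finset.Icc 1 n, c l * (σw l ω * ξ l ω)) ^ 2 :=
    funext fun ω => by rw [hpt ω]
  calc ∫ ω, (∑ j ∈ Finset.Icc 1 n, f j * xiJN ξ σw n j ω) ^ 2 ∂ℙ
      = ∫ ω, (∑ l ∈ Finset.Icc 1 n, c l * (σw l ω * ξ l ω)) ^ 2 ∂ℙ := by rw [heq]
    _ ≤ σstar * ∑ l ∈ Finset.Icc 1 n, (c l) ^ 2 :=
        weighted_sum_sq_le n hpos ξ σw hmξ hmσ hindepξ hident hmean hvar
          σstar hσstar hbound hindepσξ c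
    _ = σstar * ∑ j ∈ Finset.Icc 1 n, (f j) ^ 2 := by
        rw [phi_parseval n hodd hpos f]
end

section
/- For the Pinsker weight vector λ_α with parameters integer β ≥ 1, ω_α > 0 and integer n ≥ 3, and for every x ∈ [0,1]: |Σ_{j=1}^n λ_α(j) (φ_j(x)² − 1)| ≤ 1 + 2^{β+1}. -/
open Finset

/-- Pinsker weight vector with parameters `β`, `ω_α`, `n`. -/
noncomputable def pinskerWeight (β : ℕ) (ωa : ℝ) (n j : ℕ) : ℝ :=
  if j ≤ Nat.floor (ωa / Real.log n) then 1
  else if (j : ℝ) ≤ ωa then 1 - ((j : ℝ) / ωa) ^ β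
  else 0

lemma pinskerWeight_nonneg (β : ℕ) (ωa : ℝ) (hω : 0 < ωa) (n j : ℕ) :
    0 ≤ pinskerWeight β ωa n j := by
  unfold pinskerWeight
  split_ifs with h1 h2
  · norm_num
  · have h : ((j : ℝ) / ωa) ^ β ≤ 1 := by
      apply pow_le_one₀ (by positivity)
      rw [div_le_one hω]; exact h2
    linarith
  · norm_num

lemma pinskerWeight_le_one (β : ℕ) (ωa : ℝ) (hω : 0 < ωa) (n j : ℕ) :
    pinskerWeight β ωa n j ≤ 1 := by
  unfold pinskerWeight
  split_ifs with h1 h2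
  · norm_num
  · have : (0:ℝ) ≤ ((j : ℝ) / ωa) ^ β := by positivity
    linarith
  · norm_num

lemma pinskerWeight_antitone (β : ℕ) (ωa : ℝ) (hω : 0 < ωa) (n j : ℕ) :
    pinskerWeight β ωa n (j + 1) ≤ pinskerWeight β ωa n j := by
  by_cases h1 : j ≤ Nat.floor (ωa / Real.log n)
  · have hj : pinskerWeight β ωa n j = 1 := by unfold pinskerWeight; rw [if_pos h1]
    rw [hj]; exact pinskerWeight_le_one β ωa hω n (j+1)
  · have h1' : ¬ (j + 1 ≤ Nat.floor (ωa / Real.log n)) := by omega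
    by_cases h2 : ((j + 1 : ℕ) : ℝ) ≤ ωa
    · have h2' : (j : ℝ) ≤ ωa := by push_cast at h2; linarith
      unfold pinskerWeight
      rw [if_neg h1, if_neg h1', if_pos h2, if_pos h2']
      have hpow : ((j : ℝ) / ωa) ^ β ≤ (((j + 1 : ℕ) : ℝ) / ωa) ^ β := by
        gcongr
        push_cast; linarith
      linarith
    · have hz : pinskerWeight β ωa n (j+1) = 0 := by
        unfold pinskerWeight
        rw [if_neg h1', if_neg h2]
      rw [hz]; exact pinskerWeight_nonneg β ωa hω n j

lemma key_sum (w c f : ℕ → ℝ) (hw0 : ∀ j, 0 ≤ w j) (hw1 : ∀ j, w j ≤ 1)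
    (hmono : ∀ j, w (j + 1) ≤ w j) (hc : ∀ k, |c k| ≤ 1)
    (hf1 : f 1 = 0) (hfe : ∀ k, 1 ≤ k → f (2 * k) = w (2 * k) * c k)
    (hfo : ∀ k, 1 ≤ k → f (2 * k + 1) = -(w (2 * k + 1) * c k)) :
    ∀ N, |∑ j ∈ Finset.Icc 1 N, f j| ≤ 2 := by
  have main : ∀ K, |∑ j ∈ Finset.Icc 1 (2 * K + 1), f j| + w (2 * K + 1) ≤ 1 := by
    intro K
    induction K with
    | zero => simpa [hf1] using hw1 1
    | succ K ih =>
      have e1 : 2 * (K + 1) + 1 = (2 * K + 1) + 1 + 1 := by ring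
      rw [e1, Finset.sum_Icc_succ_top (by omega), Finset.sum_Icc_succ_top (by omega)]
      have e2 : 2 * K + 1 + 1 = 2 * (K + 1) := by ring
      rw [e2, hfe (K + 1) (by omega), hfo (K + 1) (by omega)]
      have hd : w (2 * (K + 1) + 1) ≤ w (2 * (K + 1)) := hmono _
      set S := ∑ j ∈ Finset.Icc 1 (2 * K + 1), f j with hS
      have habs : |S + w (2 * (K + 1)) * c (K + 1) + -(w (2 * (K + 1) + 1) * c (K + 1))| ≤
          |S| + (w (2 * (K + 1)) - w (2 * (K + 1) + 1)) * |c (K + 1)| := by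
        calc |S + w (2 * (K + 1)) * c (K + 1) + -(w (2 * (K + 1) + 1) * c (K + 1))|
            = |S + (w (2 * (K + 1)) - w (2 * (K + 1) + 1)) * c (K + 1)| := by
              congr 1; ring
          _ ≤ |S| + |(w (2 * (K + 1)) - w (2 * (K + 1) + 1)) * c (K + 1)| := abs_add_le _ _
          _ = |S| + (w (2 * (K + 1)) - w (2 * (K + 1) + 1)) * |c (K + 1)| := by
              rw [abs_mul, abs_of_nonneg (show (0:ℝ) ≤
                w (2 * (K + 1)) - w (2 * (K + 1) + 1) by linarith)]
      have hck := hc (K + 1)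
      have h1 : (w (2 * (K + 1)) - w (2 * (K + 1) + 1)) * |c (K + 1)| ≤
          w (2 * (K + 1)) - w (2 * (K + 1) + 1) := by
        nlinarith [abs_nonneg (c (K + 1))]
      have hm2 : w (2 * (K + 1)) ≤ w (2 * K + 1) := by
        have h := hmono (2 * K + 1); rw [e2] at h; exact h
      linarith
  intro N
  rcases Nat.even_or_odd N with ⟨K, hK⟩ | ⟨K, hK⟩
  · rcases Nat.eq_zero_or_pos K with rfl | hKpos
    · have : N = 0 := by omega
      subst this; norm_num
    · have hN : N = 2 * (K - 1) + 1 + 1 := by omega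
      rw [hN, Finset.sum_Icc_succ_top (by omega)]
      have e2 : 2 * (K - 1) + 1 + 1 = 2 * K := by omega
      rw [e2, hfe K hKpos]
      have hmain := main (K - 1)
      set S := ∑ j ∈ Finset.Icc 1 (2 * (K - 1) + 1), f j with hS
      have habs : |S + w (2 * K) * c K| ≤ |S| + w (2 * K) * |c K| := by
        refine (abs_add_le _ _).trans ?_
        rw [abs_mul, abs_of_nonneg (hw0 _)]
      have hck := hc K
      have hw0' := hw0 (2 * K)
      have hmul : w (2 * K) * |c K| ≤ w (2 * K) := mul_le_of_le_one_right hw0' hck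
      have hm : w (2 * K) ≤ w (2 * (K - 1) + 1) := by
        have h := hmono (2 * (K - 1) + 1)
        have e : 2 * (K - 1) + 1 + 1 = 2 * K := by omega
        rw [e] at h; exact h
      linarith
  · have hN : N = 2 * K + 1 := by omega
    have h1 := main K
    have h2 := hw0 (2 * K + 1)
    rw [hN]; linarith

/-- For the Pinsker weight vector `λ_α` with integer `β ≥ 1`, `ω_α > 0`, integer `n ≥ 3`,
and every `x ∈ [0,1]`: `|Σ_{j=1}^n λ_α(j)(φ_j(x)² − 1)| ≤ 1 + 2^{β+1}`. -/
theorem pinsker_weight_trig_sum_bound (β n : ℕ) (hβ : 1 ≤ β) (hn : 3 ≤ n)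
    (ωa : ℝ) (hω : 0 < ωa) (x : ℝ) (hx : x ∈ Set.Icc (0 : ℝ) 1) :
    |∑ j ∈ Finset.Icc 1 n, pinskerWeight β ωa n j * ((phi j x) ^ 2 - 1)|
      ≤ 1 + 2 ^ (β + 1) := by
  set c : ℕ → ℝ := fun k => Real.cos (2 * (2 * Real.pi * k * x)) with hc_def
  have h2 : Real.sqrt 2 ^ 2 = 2 := Real.sq_sqrt (by norm_num)
  have hphie : ∀ k, 1 ≤ k → (phi (2 * k) x) ^ 2 - 1 = c k := by
    intro k hk
    have h1 : (2 * k) ≠ 1 := by omega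
    have h2' : (2 * k) % 2 = 0 := by omega
    have h3 : (2 * k) / 2 = k := by omega
    simp only [phi, if_neg h1, if_pos h2', h3, hc_def]
    rw [mul_pow, h2, Real.cos_two_mul]
  have hphio : ∀ k, 1 ≤ k → (phi (2 * k + 1) x) ^ 2 - 1 = -(c k) := by
    intro k hk
    have h1 : (2 * k + 1) ≠ 1 := by omega
    have h2' : ¬ ((2 * k + 1) % 2 = 0) := by omega
    have h3 : (2 * k + 1) / 2 = k := by omega
    simp only [phi, if_neg h1, if_neg h2', h3, hc_def]
    rw [mul_pow, h2, Real.cos_two_mul, Real.sin_sq]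
    ring
  have key := key_sum (fun j => pinskerWeight β ωa n j) c
    (fun j => pinskerWeight β ωa n j * ((phi j x) ^ 2 - 1))
    (fun j => pinskerWeight_nonneg β ωa hω n j)
    (fun j => pinskerWeight_le_one β ωa hω n j)
    (fun j => pinskerWeight_antitone β ωa hω n j)
    (fun k => Real.abs_cos_le_one _)
    (by simp [phi])
    (fun k hk => by
      show pinskerWeight β ωa n (2 * k) * ((phi (2 * k) x) ^ 2 - 1) = _
      rw [hphie k hk])
    (fun k hk => by
      show pinskerWeight β ωa n (2 * k + 1) * ((phi (2 * k + 1) x) ^ 2 - 1) = _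
      rw [hphio k hk]; ring) n
  have hpow : (2:ℝ) ≤ 2 ^ (β + 1) := by
    calc (2:ℝ) = 2 ^ 1 := by norm_num
      _ ≤ 2 ^ (β + 1) := pow_le_pow_right₀ (by norm_num) (by omega)
  linarith
end

section
/- For the Pinsker weight vector λ_α with parameters integer β ≥ 1, ω_α > 0 and integer n ≥ 3, and for every x ∈ [0,1]: |Σ_{j=1}^n λ_α(j)² (φ_j(x)² − 1)| ≤ 1 + 2^{β+2} + 2^{2β+1}. -/
open Finset

lemma pw_nonneg {β : ℕ} {ωa : ℝ} (hω : 0 < ωa) (n j : ℕ) :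
    0 ≤ pinskerWeight β ωa n j := by
  unfold pinskerWeight
  split_ifs with h1 h2
  · norm_num
  · have h0 : 0 ≤ (j : ℝ) / ωa := by positivity
    have hle : (j : ℝ) / ωa ≤ 1 := by rw [div_le_one hω]; exact h2
    have := pow_le_one₀ h0 hle (n := β)
    linarith
  · exact le_rfl

lemma pw_le_one {β : ℕ} {ωa : ℝ} (hω : 0 < ωa) (n j : ℕ) :
    pinskerWeight β ωa n j ≤ 1 := by
  unfold pinskerWeight
  split_ifs with h1 h2
  · exact le_rfl
  · have h0 : 0 ≤ ((j : ℝ) / ωa) ^ β := by positivity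
    linarith
  · norm_num

lemma pw_anti {β : ℕ} {ωa : ℝ} (hω : 0 < ωa) (n j : ℕ) :
    pinskerWeight β ωa n (j + 1) ≤ pinskerWeight β ωa n j := by
  unfold pinskerWeight
  split_ifs with h1 h2 h3 h4 h5 h6 h7 h8
  · exact le_rfl
  · omega
  · omega
  · have h0 : 0 ≤ (((j : ℕ) + 1 : ℕ) : ℝ) / ωa := by positivity
    nlinarith [pow_nonneg h0 β]
  · have h0 : 0 ≤ (j : ℝ) / ωa := by positivity
    have hmono : ((j : ℝ) / ωa) ^ β ≤ ((((j : ℕ) + 1 : ℕ) : ℝ) / ωa) ^ β := by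
      gcongr
      push_cast
      linarith
    linarith
  · exfalso
    push_cast at h4
    exact h6 (by linarith)
  · norm_num
  · have h0 : 0 ≤ (j : ℝ) / ωa := by positivity
    have hle : (j : ℝ) / ωa ≤ 1 := by rw [div_le_one hω]; exact h8
    have := pow_le_one₀ h0 hle (n := β)
    linarith
  · exact le_rfl

lemma phi_one (x : ℝ) : phi 1 x = 1 := by simp [phi]

lemma phi_sq_le_two (j : ℕ) (x : ℝ) : phi j x ^ 2 ≤ 2 := by
  unfold phi
  split_ifs
  · norm_num
  · rw [mul_pow, Real.sq_sqrt (by norm_num : (0:ℝ) ≤ 2)]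
    nlinarith [Real.neg_one_le_cos (2 * Real.pi * ((j / 2 : ℕ) : ℝ) * x),
      Real.cos_le_one (2 * Real.pi * ((j / 2 : ℕ) : ℝ) * x)]
  · rw [mul_pow, Real.sq_sqrt (by norm_num : (0:ℝ) ≤ 2)]
    nlinarith [Real.neg_one_le_sin (2 * Real.pi * ((j / 2 : ℕ) : ℝ) * x),
      Real.sin_le_one (2 * Real.pi * ((j / 2 : ℕ) : ℝ) * x)]

lemma phi_t_bound (j : ℕ) (x : ℝ) : |phi j x ^ 2 - 1| ≤ 1 := by
  rw [abs_le]
  constructor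
  · nlinarith [sq_nonneg (phi j x)]
  · linarith [phi_sq_le_two j x]

lemma phi_pair (k : ℕ) (hk : 1 ≤ k) (x : ℝ) :
    phi (2 * k + 1) x ^ 2 - 1 = -(phi (2 * k) x ^ 2 - 1) := by
  have h1 : 2 * k + 1 ≠ 1 := by omega
  have h2 : (2 * k + 1) % 2 = 1 := by omega
  have h3 : 2 * k ≠ 1 := by omega
  have h4 : (2 * k) % 2 = 0 := by omega
  have h5 : (2 * k + 1) / 2 = k := by omega
  have h6 : (2 * k) / 2 = k := by omega
  rw [phi, phi]
  simp only [h1, h2, h3, h4, h5, h6, if_false, if_true, ite_false, ite_true,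
    Nat.one_ne_zero]
  have hs := Real.sin_sq_add_cos_sq (2 * Real.pi * (k : ℝ) * x)
  rw [mul_pow, mul_pow, Real.sq_sqrt (by norm_num : (0:ℝ) ≤ 2)]
  nlinarith [hs]

lemma abs_sum_pair_bound (w t : ℕ → ℝ) (hw0 : ∀ j, 0 ≤ w j) (hw1 : ∀ j, w j ≤ 1)
    (hanti : ∀ j, w (j + 1) ≤ w j) (ht1 : t 1 = 0) (htb : ∀ j, |t j| ≤ 1)
    (hpair : ∀ k, 1 ≤ k → t (2 * k + 1) = -(t (2 * k))) (m : ℕ) (hm : 1 ≤ m) :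
    |∑ j ∈ Finset.Icc 1 m, w j ^ 2 * t j| ≤ 1 := by
  have hsq : ∀ j, w (j + 1) ^ 2 ≤ w j ^ 2 := fun j => pow_le_pow_left₀ (hw0 _) (hanti j) 2
  have hterm : ∀ j, |w j ^ 2 * t j| ≤ w j ^ 2 := by
    intro j
    rw [abs_mul, abs_of_nonneg (sq_nonneg _)]
    exact mul_le_of_le_one_right (sq_nonneg _) (htb j)
  have main : ∀ k, |∑ j ∈ Finset.Icc 1 (2 * k + 1), w j ^ 2 * t j|
      ≤ w 2 ^ 2 - w (2 * k + 2) ^ 2 := by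
    intro k
    induction k with
    | zero => simp [ht1]
    | succ k ih =>
      have e1 : 2 * (k + 1) + 1 = (2 * k + 2) + 1 := by ring
      rw [e1, Finset.sum_Icc_succ_top (by omega), Finset.sum_Icc_succ_top (by omega)]
      have hp : t (2 * k + 2 + 1) = -(t (2 * k + 2)) := by
        have h := hpair (k + 1) (by omega)
        have e2 : 2 * (k + 1) = 2 * k + 2 := by ring
        rw [e2] at h
        exact h
      rw [hp]
      set S := ∑ j ∈ Finset.Icc 1 (2 * k + 1), w j ^ 2 * t j with hS
      have hD : 0 ≤ w (2 * k + 2) ^ 2 - w (2 * k + 2 + 1) ^ 2 :=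
        sub_nonneg.2 (hsq (2 * k + 2))
      have hcomb : S + w (2 * k + 2) ^ 2 * t (2 * k + 2)
            + w (2 * k + 2 + 1) ^ 2 * -(t (2 * k + 2))
          = S + (w (2 * k + 2) ^ 2 - w (2 * k + 2 + 1) ^ 2) * t (2 * k + 2) := by ring
      rw [hcomb]
      have h2 : |(w (2 * k + 2) ^ 2 - w (2 * k + 2 + 1) ^ 2) * t (2 * k + 2)|
          ≤ w (2 * k + 2) ^ 2 - w (2 * k + 2 + 1) ^ 2 := by
        rw [abs_mul, abs_of_nonneg hD]
        exact mul_le_of_le_one_right hD (htb _)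
      have e3 : 2 * (k + 1) + 2 = (2 * k + 2 + 1) + 1 := by ring
      rw [e3]
      calc |S + (w (2 * k + 2) ^ 2 - w (2 * k + 2 + 1) ^ 2) * t (2 * k + 2)|
          ≤ |S| + |(w (2 * k + 2) ^ 2 - w (2 * k + 2 + 1) ^ 2) * t (2 * k + 2)| :=
            abs_add_le _ _
        _ ≤ (w 2 ^ 2 - w (2 * k + 2) ^ 2) + (w (2 * k + 2) ^ 2 - w (2 * k + 2 + 1) ^ 2) :=
            add_le_add ih h2
        _ ≤ w 2 ^ 2 - w (2 * k + 2 + 1 + 1) ^ 2 := by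
            have := hsq (2 * k + 2 + 1)
            linarith
  have hw2 : w 2 ^ 2 ≤ 1 := by nlinarith [hw0 2, hw1 2]
  rcases Nat.even_or_odd m with he | ho
  · obtain ⟨r, hr⟩ := he
    have hr' : m = (2 * (r - 1) + 1) + 1 := by omega
    rw [hr', Finset.sum_Icc_succ_top (by omega)]
    calc |(∑ j ∈ Finset.Icc 1 (2 * (r - 1) + 1), w j ^ 2 * t j)
          + w (2 * (r - 1) + 1 + 1) ^ 2 * t (2 * (r - 1) + 1 + 1)|
        ≤ |∑ j ∈ Finset.Icc 1 (2 * (r - 1) + 1), w j ^ 2 * t j|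
          + |w (2 * (r - 1) + 1 + 1) ^ 2 * t (2 * (r - 1) + 1 + 1)| := abs_add_le _ _
      _ ≤ (w 2 ^ 2 - w (2 * (r - 1) + 2) ^ 2) + w (2 * (r - 1) + 1 + 1) ^ 2 :=
          add_le_add (main (r - 1)) (hterm _)
      _ ≤ 1 := by
          have e : 2 * (r - 1) + 2 = 2 * (r - 1) + 1 + 1 := by ring
          rw [e]
          linarith
  · obtain ⟨r, hr⟩ := ho
    rw [hr]
    have h1 := main r
    have h2 := sq_nonneg (w (2 * r + 2))
    linarith

/-- For the Pinsker weight vector `λ_α` with integer `β ≥ 1`, `ω_α > 0`, integer `n ≥ 3`,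
and every `x ∈ [0,1]`: `|Σ_{j=1}^n λ_α(j)²(φ_j(x)² − 1)| ≤ 1 + 2^{β+2} + 2^{2β+1}`. -/
theorem pinsker_weight_sq_trig_sum_bound (β n : ℕ) (hβ : 1 ≤ β) (hn : 3 ≤ n)
    (ωa : ℝ) (hω : 0 < ωa) (x : ℝ) (hx : x ∈ Set.Icc (0 : ℝ) 1) :
    |∑ j ∈ Finset.Icc 1 n, (pinskerWeight β ωa n j) ^ 2 * ((phi j x) ^ 2 - 1)|
      ≤ 1 + 2 ^ (β + 2) + 2 ^ (2 * β + 1) := by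
  have key := abs_sum_pair_bound (fun j => pinskerWeight β ωa n j)
    (fun j => phi j x ^ 2 - 1)
    (fun j => pw_nonneg hω n j) (fun j => pw_le_one hω n j)
    (fun j => pw_anti hω n j)
    (by simp [phi_one]) (fun j => phi_t_bound j x)
    (fun k hk => phi_pair k hk x) n (by omega)
  have hp1 : (0:ℝ) ≤ 2 ^ (β + 2) := by positivity
  have hp2 : (0:ℝ) ≤ 2 ^ (2 * β + 1) := by positivity
  linarith
end

section
/- For every continuously differentiable function g : [0,1] → ℝ and every integer n ≥ 1: n^{-1} Σ_{k=1}^n g(k/n)² ≤ 2 ∫₀¹ g(x)² dx + (2/n²) ∫₀¹ g'(x)² dx. -/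
open Finset intervalIntegral

lemma step_bound_aux (g g' : ℝ → ℝ)
    (hderiv : ∀ x ∈ Set.Icc (0 : ℝ) 1, HasDerivWithinAt g (g' x) (Set.Icc (0 : ℝ) 1) x)
    (hcont : ContinuousOn g' (Set.Icc (0 : ℝ) 1))
    (n : ℕ) (hn : 1 ≤ n) (a b : ℝ) (ha : 0 ≤ a) (hab : a < b) (hb : b ≤ 1)
    (hba : b - a = (n : ℝ)⁻¹) :
    (n : ℝ)⁻¹ * g b ^ 2
      ≤ 2 * (∫ x in a..b, g x ^ 2) + (n : ℝ)⁻¹ ^ 2 * ∫ x in a..b, g' x ^ 2 := by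
  have hn0 : (0 : ℝ) < n := by exact_mod_cast hn
  have hIcc : Set.Icc a b ⊆ Set.Icc (0 : ℝ) 1 := Set.Icc_subset_Icc ha hb
  have hgc : ContinuousOn g (Set.Icc (0 : ℝ) 1) := fun x hx =>
    (hderiv x hx).continuousWithinAt
  have hg2c : ContinuousOn (fun x => g x ^ 2) (Set.Icc a b) := (hgc.mono hIcc).pow 2
  have hg'2c : ContinuousOn (fun x => g' x ^ 2) (Set.Icc a b) := (hcont.mono hIcc).pow 2
  -- the comparison function
  set h : ℝ → ℝ := fun x => (n : ℝ) * g x ^ 2 + g' x ^ 2 / n with hdef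
  have hhc : ContinuousOn h (Set.Icc a b) :=
    (hg2c.const_smul (n:ℝ)).add (hg'2c.div_const _)
  have hhnn : ∀ x, 0 ≤ h x := fun x => by positivity
  -- minimum point of g^2 on [a,b]
  obtain ⟨x0, hx0, hmin⟩ := isCompact_Icc.exists_isMinOn (Set.nonempty_Icc.mpr hab.le) hg2c
  -- (b - a) * g x0 ^ 2 ≤ ∫ g^2
  have hint_g2 : IntervalIntegrable (fun x => g x ^ 2) MeasureTheory.volume a b := by
    apply ContinuousOn.intervalIntegrable
    rwa [Set.uIcc_of_le hab.le]
  have h1 : (b - a) * g x0 ^ 2 ≤ ∫ x in a..b, g x ^ 2 := by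
    have := intervalIntegral.integral_mono_on hab.le intervalIntegrable_const hint_g2
      (fun x hx => hmin hx)
    simpa using this
  -- FTC on [x0, b]
  have hx0b : x0 ≤ b := hx0.2
  have hftc : ∫ t in x0..b, (2 * g t * g' t) = g b ^ 2 - g x0 ^ 2 := by
    apply intervalIntegral.integral_eq_sub_of_hasDeriv_right_of_le hx0b
    · exact (hg2c.mono (Set.Icc_subset_Icc hx0.1 le_rfl))
    · intro t ht
      have ht01 : t ∈ Set.Ioo (0 : ℝ) 1 :=
        ⟨lt_of_le_of_lt (ha.trans hx0.1) ht.1, lt_of_lt_of_le ht.2 hb⟩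
      have hmem : Set.Icc (0:ℝ) 1 ∈ nhds t := Icc_mem_nhds ht01.1 ht01.2
      have hd : HasDerivAt g (g' t) t := (hderiv t (Set.Ioo_subset_Icc_self ht01)).hasDerivAt hmem
      have := (hd.fun_pow 2).hasDerivWithinAt (s := Set.Ioi t)
      simpa [mul_comm, mul_assoc, mul_left_comm] using this
    · apply ContinuousOn.intervalIntegrable
      rw [Set.uIcc_of_le hx0b]
      have hsub : Set.Icc x0 b ⊆ Set.Icc a b := Set.Icc_subset_Icc hx0.1 le_rfl
      exact (continuousOn_const.mul ((hgc.mono hIcc).mono hsub)).mul ((hcont.mono hIcc).mono hsub)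
  -- pointwise bound 2 g g' ≤ h
  have hpt : ∀ t ∈ Set.Icc x0 b, 2 * g t * g' t ≤ h t := by
    intro t _
    have h2 := sq_nonneg ((n : ℝ) * g t - g' t)
    have : 0 < (n:ℝ) := hn0
    simp only [hdef]
    rw [← mul_le_mul_iff_left₀ hn0]
    have heq : ((n:ℝ) * g t ^ 2 + g' t ^ 2 / n) * n = (n:ℝ) ^ 2 * g t ^ 2 + g' t ^ 2 := by
      field_simp
    rw [heq]
    nlinarith [sq_nonneg ((n : ℝ) * g t - g' t)]
  have hsub : Set.Icc x0 b ⊆ Set.Icc a b := Set.Icc_subset_Icc hx0.1 le_rfl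
  have hint1 : IntervalIntegrable (fun t => 2 * g t * g' t) MeasureTheory.volume x0 b := by
    apply ContinuousOn.intervalIntegrable
    rw [Set.uIcc_of_le hx0b]
    exact (continuousOn_const.mul ((hgc.mono hIcc).mono hsub)).mul ((hcont.mono hIcc).mono hsub)
  have hinth : IntervalIntegrable h MeasureTheory.volume x0 b := by
    apply ContinuousOn.intervalIntegrable
    rw [Set.uIcc_of_le hx0b]
    exact hhc.mono hsub
  have hinth' : IntervalIntegrable h MeasureTheory.volume a x0 := by
    apply ContinuousOn.intervalIntegrable
    rw [Set.uIcc_of_le hx0.1]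
    exact hhc.mono (Set.Icc_subset_Icc le_rfl hx0b)
  have h2 : ∫ t in x0..b, (2 * g t * g' t) ≤ ∫ t in x0..b, h t :=
    intervalIntegral.integral_mono_on hx0b hint1 hinth hpt
  have h3 : ∫ t in x0..b, h t ≤ ∫ t in a..b, h t := by
    have hadd := intervalIntegral.integral_add_adjacent_intervals hinth' hinth
    have hnn : 0 ≤ ∫ t in a..x0, h t :=
      intervalIntegral.integral_nonneg hx0.1 (fun t _ => hhnn t)
    linarith [hadd]
  have hint_g'2 : IntervalIntegrable (fun x => g' x ^ 2) MeasureTheory.volume a b := by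
    apply ContinuousOn.intervalIntegrable
    rwa [Set.uIcc_of_le hab.le]
  have h4 : ∫ t in a..b, h t = (n:ℝ) * (∫ x in a..b, g x ^ 2) + (∫ x in a..b, g' x ^ 2) / n := by
    simp only [hdef]
    rw [intervalIntegral.integral_add (hint_g2.const_mul _) (hint_g'2.div_const _),
      intervalIntegral.integral_const_mul, intervalIntegral.integral_div]
  -- combine
  have hgx0 : g x0 ^ 2 ≤ (n:ℝ) * ∫ x in a..b, g x ^ 2 := by
    rw [hba] at h1
    calc g x0 ^ 2 = (n:ℝ) * ((n:ℝ)⁻¹ * g x0 ^ 2) := by field_simp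
    _ ≤ (n:ℝ) * ∫ x in a..b, g x ^ 2 := by
        apply mul_le_mul_of_nonneg_left h1 hn0.le
  have hgb : g b ^ 2 ≤ 2 * (n:ℝ) * (∫ x in a..b, g x ^ 2) + (∫ x in a..b, g' x ^ 2) / n := by
    nlinarith [hftc, h2, h3, h4, hgx0]
  have := mul_le_mul_of_nonneg_left hgb (inv_nonneg.mpr hn0.le)
  calc (n : ℝ)⁻¹ * g b ^ 2
      ≤ (n:ℝ)⁻¹ * (2 * (n:ℝ) * (∫ x in a..b, g x ^ 2) + (∫ x in a..b, g' x ^ 2) / n) := this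
    _ = 2 * (∫ x in a..b, g x ^ 2) + (n : ℝ)⁻¹ ^ 2 * ∫ x in a..b, g' x ^ 2 := by
        field_simp

/-- For every continuously differentiable function `g : [0,1] → ℝ` (with derivative `g'`)
and every integer `n ≥ 1`:
`n⁻¹ Σ_{k=1}^n g(k/n)² ≤ 2 ∫₀¹ g(x)² dx + (2/n²) ∫₀¹ g'(x)² dx`. -/
theorem riemann_sum_sq_bound (g g' : ℝ → ℝ)
    (hderiv : ∀ x ∈ Set.Icc (0 : ℝ) 1, HasDerivWithinAt g (g' x) (Set.Icc (0 : ℝ) 1) x)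
    (hcont : ContinuousOn g' (Set.Icc (0 : ℝ) 1))
    (n : ℕ) (hn : 1 ≤ n) :
    (n : ℝ)⁻¹ * ∑ k ∈ Finset.Icc 1 n, (g ((k : ℝ) / n)) ^ 2
      ≤ 2 * ∫ x in (0 : ℝ)..1, (g x) ^ 2 + 2 / (n : ℝ) ^ 2 * ∫ x in (0 : ℝ)..1, (g' x) ^ 2 := by
  have hn0 : (0 : ℝ) < n := by exact_mod_cast hn
  have hgc : ContinuousOn g (Set.Icc (0 : ℝ) 1) := fun x hx => (hderiv x hx).continuousWithinAt
  set a : ℕ → ℝ := fun k => (k : ℝ) / n with hadef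
  have hmem : ∀ k, k ≤ n → a k ∈ Set.Icc (0 : ℝ) 1 := by
    intro k hk
    constructor
    · positivity
    · rw [div_le_one hn0]; exact_mod_cast hk
  have hlt : ∀ k : ℕ, a k < a (k + 1) := by
    intro k
    simp only [hadef]
    rw [div_lt_div_iff₀ hn0 hn0]
    push_cast
    nlinarith [Nat.cast_nonneg (α := ℝ) k]
  have hintpiece : ∀ (f : ℝ → ℝ), ContinuousOn f (Set.Icc (0:ℝ) 1) → ∀ k < n,
      IntervalIntegrable f MeasureTheory.volume (a k) (a (k+1)) := by
    intro f hf k hk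
    apply ContinuousOn.intervalIntegrable
    apply hf.mono
    rw [Set.uIcc_of_le (hlt k).le]
    exact Set.Icc_subset_Icc (hmem k hk.le).1 (hmem (k+1) hk).2
  have hg2c : ContinuousOn (fun x => g x ^ 2) (Set.Icc (0:ℝ) 1) := hgc.pow 2
  have hg'2c : ContinuousOn (fun x => g' x ^ 2) (Set.Icc (0:ℝ) 1) := hcont.pow 2
  have hsum2 : ∑ k ∈ Finset.range n, ∫ x in a k..a (k+1), g x ^ 2
      = ∫ x in (0:ℝ)..1, g x ^ 2 := by
    have := intervalIntegral.sum_integral_adjacent_intervals (hintpiece _ hg2c)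
    simpa [hadef, div_self hn0.ne'] using this
  have hsum2' : ∑ k ∈ Finset.range n, ∫ x in a k..a (k+1), g' x ^ 2
      = ∫ x in (0:ℝ)..1, g' x ^ 2 := by
    have := intervalIntegral.sum_integral_adjacent_intervals (hintpiece _ hg'2c)
    simpa [hadef, div_self hn0.ne'] using this
  have key : ∀ k ∈ Finset.range n,
      (n : ℝ)⁻¹ * g (a (k+1)) ^ 2
        ≤ 2 * (∫ x in a k..a (k+1), g x ^ 2) + (n:ℝ)⁻¹ ^ 2 * ∫ x in a k..a (k+1), g' x ^ 2 := by
    intro k hk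
    rw [Finset.mem_range] at hk
    apply step_bound_aux g g' hderiv hcont n hn
    · exact (hmem k hk.le).1
    · exact hlt k
    · exact (hmem (k+1) hk).2
    · simp only [hadef]
      push_cast
      rw [div_sub_div_same]
      ring_nf
  -- rewrite the LHS sum
  have hL : ∑ k ∈ Finset.Icc 1 n, (g ((k : ℝ) / n)) ^ 2
      = ∑ k ∈ Finset.range n, g (a (k+1)) ^ 2 := by
    rw [← Finset.Ico_add_one_right_eq_Icc, Finset.sum_Ico_eq_sum_range]
    simp only [Nat.add_sub_cancel, hadef]
    apply Finset.sum_congr rfl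
    intro i _
    congr 2
    push_cast
    ring
  rw [hL, Finset.mul_sum]
  have step : ∑ k ∈ Finset.range n, (n : ℝ)⁻¹ * g (a (k+1)) ^ 2
      ≤ ∑ k ∈ Finset.range n,
        (2 * (∫ x in a k..a (k+1), g x ^ 2) + (n:ℝ)⁻¹ ^ 2 * ∫ x in a k..a (k+1), g' x ^ 2) :=
    Finset.sum_le_sum key
  have hsplit : ∑ k ∈ Finset.range n,
        (2 * (∫ x in a k..a (k+1), g x ^ 2) + (n:ℝ)⁻¹ ^ 2 * ∫ x in a k..a (k+1), g' x ^ 2)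
      = 2 * (∫ x in (0:ℝ)..1, g x ^ 2) + (n:ℝ)⁻¹ ^ 2 * ∫ x in (0:ℝ)..1, g' x ^ 2 := by
    rw [Finset.sum_add_distrib, ← Finset.mul_sum, ← Finset.mul_sum, hsum2, hsum2']
  have h2nn : 0 ≤ ∫ x in (0:ℝ)..1, g' x ^ 2 :=
    intervalIntegral.integral_nonneg zero_le_one (fun x _ => sq_nonneg _)
  -- unfold the RHS (the integral notation captures everything after the comma)
  have hint01 : IntervalIntegrable (fun x => g x ^ 2) MeasureTheory.volume 0 1 := by
    apply ContinuousOn.intervalIntegrable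
    rwa [Set.uIcc_of_le zero_le_one]
  have hRHS : (2 * ∫ x in (0 : ℝ)..1, (g x) ^ 2 + 2 / (n : ℝ) ^ 2 * ∫ x in (0 : ℝ)..1, (g' x) ^ 2)
      = 2 * (∫ x in (0:ℝ)..1, g x ^ 2)
        + 2 * (2 / (n:ℝ) ^ 2 * ∫ x in (0:ℝ)..1, g' x ^ 2) := by
    rw [intervalIntegral.integral_add hint01 intervalIntegrable_const]
    simp [mul_add]
  rw [hRHS]
  have hfin : (n:ℝ)⁻¹ ^ 2 * (∫ x in (0:ℝ)..1, g' x ^ 2)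
      ≤ 2 * (2 / (n:ℝ) ^ 2 * ∫ x in (0:ℝ)..1, g' x ^ 2) := by
    rw [← mul_assoc]
    apply mul_le_mul_of_nonneg_right ?_ h2nn
    rw [inv_pow, div_eq_mul_inv]
    have hp : 0 < ((n:ℝ) ^ 2)⁻¹ := inv_pos.mpr (pow_pos hn0 2)
    nlinarith [hp]
  linarith [step, hsplit.le, hsplit.ge, hfin]
end
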